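/- arXiv:2403.19815 — 5 statements merged into one kernel-verified Lean document; each statement's English description precedes it below -/
import Mathlib

section
/- Let z and w be orthonormal vectors in ℝ^{n+1} and let γ(t) = (cos t)·z + (sin t)·w. If F̃ is an elliptic Minkowski integrand, then the function f(t) = ⟨∇F̃(γ(t)), z⟩ is strictly decreasing on the interval [0, π]. -/
open RealInnerProductSpace

set_option maxHeartbeats 1000000
noncomputable section

/-- Euclidean space ℝ^{n+1}. -/
abbrev Euc (n : ℕ) := EuclideanSpace ℝ (Fin (n + 1))

/-- A Minkowski integrand: `F 0 = 0`, smooth away from the origin,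
positively 1-homogeneous, and positive on nonzero vectors. -/
def MinkowskiIntegrand (n : ℕ) (F : Euc n → ℝ) : Prop :=
  F 0 = 0 ∧ ContDiffOn ℝ (⊤ : ℕ∞) F {0}ᶜ ∧
    (∀ s : ℝ, 0 < s → ∀ x : Euc n, F (s • x) = s * F x) ∧
    ∀ x : Euc n, x ≠ 0 → 0 < F x

/-- Ellipticity: the second Fréchet derivative at any unit vector is positive definite
on the orthogonal complement of that vector. -/
def Elliptic (n : ℕ) (F : Euc n → ℝ) : Prop :=
  ∀ x v : Euc n, ‖x‖ = 1 → v ≠ 0 → ⟪x, v⟫ = 0 →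
    0 < iteratedFDeriv ℝ 2 F x ![v, v]

/-- The dual function `F^o(y) = sup {⟨y, ξ⟩ / F(ξ) : ‖ξ‖ = 1}`. -/
def dualF (n : ℕ) (F : Euc n → ℝ) (y : Euc n) : ℝ :=
  sSup {r : ℝ | ∃ ξ : Euc n, ‖ξ‖ = 1 ∧ r = ⟪y, ξ⟫ / F ξ}

theorem statement_0 {n : ℕ} (hn : 1 ≤ n) (F : Euc n → ℝ)
    (hF : MinkowskiIntegrand n F) (hFell : Elliptic n F)
    (z w : Euc n) (hz : ‖z‖ = 1) (hw : ‖w‖ = 1) (hzw : ⟪z, w⟫ = 0) :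
    StrictAntiOn (fun t : ℝ => ⟪gradient F (Real.cos t • z + Real.sin t • w), z⟫)
      (Set.Icc 0 Real.pi) := by
  obtain ⟨hF0, hFsm, hFhom, hFpos⟩ := hF
  -- basic regularity
  have hsm : ∀ x : Euc n, x ≠ 0 → ContDiffAt ℝ (⊤ : ℕ∞) F x := fun x hx =>
    hFsm.contDiffAt (isOpen_compl_singleton.mem_nhds hx)
  have hdiff : ∀ x : Euc n, x ≠ 0 → DifferentiableAt ℝ F x := fun x hx =>
    (hsm x hx).differentiableAt (by simp)
  have hdF' : ∀ x : Euc n, x ≠ 0 → DifferentiableAt ℝ (fderiv ℝ F) x := fun x hx =>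
    ((hsm x hx).fderiv_right (m := (⊤ : ℕ∞)) (by simp)).differentiableAt (by simp)
  have hGeq : gradient F = ⇑(InnerProductSpace.toDual ℝ (Euc n)).symm ∘ fderiv ℝ F := rfl
  have hGinner : ∀ (y u : Euc n), ⟪gradient F y, u⟫ = fderiv ℝ F y u := fun y u =>
    InnerProductSpace.toDual_symm_apply
  have hGdiff : ∀ x : Euc n, x ≠ 0 → DifferentiableAt ℝ (gradient F) x := by
    intro x hx
    rw [hGeq]
    exact ((InnerProductSpace.toDual ℝ (Euc n)).symm.differentiableAt).comp x (hdF' x hx)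
  have hGfderiv : ∀ (y u u' : Euc n),
      ⟪fderiv ℝ (gradient F) y u, u'⟫ = fderiv ℝ (fderiv ℝ F) y u u' := by
    intro y u u'
    rw [hGeq, LinearIsometryEquiv.comp_fderiv]
    exact InnerProductSpace.toDual_symm_apply
  -- Euler's relation
  have hEuler : ∀ y : Euc n, y ≠ 0 → fderiv ℝ F y y = F y := by
    intro y hy
    have hy1 : HasDerivAt (fun s : ℝ => s • y) y 1 := by
      simpa using (hasDerivAt_id (1 : ℝ)).smul_const y
    have h1 : HasDerivAt (fun s : ℝ => F (s • y)) (fderiv ℝ F y y) 1 := by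
      have hfd1 : HasFDerivAt F (fderiv ℝ F y) ((fun s : ℝ => s • y) 1) := by
        simpa using (hdiff y hy).hasFDerivAt
      exact hfd1.comp_hasDerivAt 1 hy1
    have h2 : (fun s : ℝ => s * F y) =ᶠ[nhds (1 : ℝ)] fun s : ℝ => F (s • y) := by
      filter_upwards [eventually_gt_nhds one_pos] with s hs
      exact (hFhom s hs y).symm
    have h1' : HasDerivAt (fun s : ℝ => s * F y) (fderiv ℝ F y y) 1 :=
      h1.congr_of_eventuallyEq h2
    have h3 : HasDerivAt (fun s : ℝ => s * F y) (F y) 1 := by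
      simpa using (hasDerivAt_id (1 : ℝ)).mul_const (F y)
    exact h1'.unique h3
  -- the curve and its derivative
  set γ : ℝ → Euc n := fun t => Real.cos t • z + Real.sin t • w with hγdef
  set v : ℝ → Euc n := fun t => (-Real.sin t) • z + Real.cos t • w with hvdef
  have hzz : ⟪z, z⟫ = 1 := by
    rw [real_inner_self_eq_norm_mul_norm, hz]; ring
  have hww : ⟪w, w⟫ = 1 := by
    rw [real_inner_self_eq_norm_mul_norm, hw]; ring
  have hwz : ⟪w, z⟫ = 0 := by rw [real_inner_comm]; exact hzw
  have hinner : ∀ a b c d : ℝ, ⟪a • z + b • w, c • z + d • w⟫ = a * c + b * d := by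
    intro a b c d
    simp only [inner_add_left, inner_add_right, real_inner_smul_left, real_inner_smul_right,
      hzz, hww, hzw, hwz]
    ring
  have hsc : ∀ t : ℝ, Real.cos t * Real.cos t + Real.sin t * Real.sin t = 1 := by
    intro t; nlinarith [Real.sin_sq_add_cos_sq t]
  have hγnorm : ∀ t, ‖γ t‖ = 1 := by
    intro t
    have h1 : ⟪γ t, γ t⟫ = 1 := by simp only [hγdef]; rw [hinner]; exact hsc t
    have h2 : ‖γ t‖ * ‖γ t‖ = 1 := by rw [← real_inner_self_eq_norm_mul_norm]; exact h1
    nlinarith [norm_nonneg (γ t)]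
  have hvnorm : ∀ t, ‖v t‖ = 1 := by
    intro t
    have h1 : ⟪v t, v t⟫ = 1 := by
      simp only [hvdef]; rw [hinner]; nlinarith [Real.sin_sq_add_cos_sq t]
    have h2 : ‖v t‖ * ‖v t‖ = 1 := by rw [← real_inner_self_eq_norm_mul_norm]; exact h1
    nlinarith [norm_nonneg (v t)]
  have hγne : ∀ t, γ t ≠ 0 := by
    intro t h
    have := hγnorm t
    rw [h, norm_zero] at this
    exact one_ne_zero this.symm
  have hvne : ∀ t, v t ≠ 0 := by
    intro t h
    have := hvnorm t
    rw [h, norm_zero] at this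
    exact one_ne_zero this.symm
  have horth : ∀ t, ⟪γ t, v t⟫ = 0 := by
    intro t
    simp only [hγdef, hvdef]; rw [hinner]; ring
  have hγ' : ∀ t, HasDerivAt γ (v t) t := by
    intro t
    exact ((Real.hasDerivAt_cos t).smul_const z).add ((Real.hasDerivAt_sin t).smul_const w)
  have hGγ : ∀ t, HasDerivAt (fun t => gradient F (γ t))
      (fderiv ℝ (gradient F) (γ t) (v t)) t := fun t =>
    ((hGdiff (γ t) (hγne t)).hasFDerivAt).comp_hasDerivAt t (hγ' t)
  -- key orthogonality: ⟪D(∇F)(γ t)(v t), γ t⟫ = 0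
  have hAx : ∀ t, ⟪fderiv ℝ (gradient F) (γ t) (v t), γ t⟫ = 0 := by
    intro t
    have g1 : HasDerivAt (fun t => ⟪gradient F (γ t), γ t⟫)
        (⟪gradient F (γ t), v t⟫ + ⟪fderiv ℝ (gradient F) (γ t) (v t), γ t⟫) t :=
      (hGγ t).inner ℝ (hγ' t)
    have g2 : (fun t => ⟪gradient F (γ t), γ t⟫) = fun t => F (γ t) := by
      funext s
      rw [hGinner]
      exact hEuler (γ s) (hγne s)
    have g3 : HasDerivAt (fun t => F (γ t)) (fderiv ℝ F (γ t) (v t)) t :=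
      ((hdiff (γ t) (hγne t)).hasFDerivAt).comp_hasDerivAt t (hγ' t)
    rw [g2] at g1
    have := g1.unique g3
    rw [← hGinner] at this
    linarith
  -- positivity of the second fundamental quantity
  have hQ : ∀ t, 0 < ⟪fderiv ℝ (gradient F) (γ t) (v t), v t⟫ := by
    intro t
    have h := hFell (γ t) (v t) (hγnorm t) (hvne t) (horth t)
    rw [iteratedFDeriv_two_apply] at h
    simp only [Matrix.cons_val_zero, Matrix.cons_val_one, Matrix.head_cons] at h
    rw [hGfderiv]
    exact h
  -- decomposition of z
  have hzdec : ∀ t : ℝ, z = Real.cos t • γ t - Real.sin t • v t := by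
    intro t
    have h1 : Real.cos t • γ t - Real.sin t • v t
        = (Real.cos t * Real.cos t + Real.sin t * Real.sin t) • z := by
      simp only [hγdef, hvdef]; module
    rw [h1, hsc t, one_smul]
  -- derivative of f
  have hfd : ∀ t, HasDerivAt (fun t : ℝ => ⟪gradient F (γ t), z⟫)
      (⟪fderiv ℝ (gradient F) (γ t) (v t), z⟫) t := by
    intro t
    have := (hGγ t).inner ℝ (hasDerivAt_const t z)
    simpa using this
  have hval : ∀ t, ⟪fderiv ℝ (gradient F) (γ t) (v t), z⟫
      = -(Real.sin t * ⟪fderiv ℝ (gradient F) (γ t) (v t), v t⟫) := by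
    intro t
    rw [hzdec t, inner_sub_right, real_inner_smul_right, real_inner_smul_right, hAx t]
    ring
  apply strictAntiOn_of_deriv_neg (convex_Icc 0 Real.pi)
  · exact fun t _ => (hfd t).continuousAt.continuousWithinAt
  · intro t ht
    rw [interior_Icc] at ht
    rw [(hfd t).deriv, hval t]
    have hs : 0 < Real.sin t := Real.sin_pos_of_pos_of_lt_pi ht.1 ht.2
    have := mul_pos hs (hQ t)
    linarith
end
end

section
/- Let F̃ be an elliptic Minkowski integrand that is convex on ℝ^{n+1}. Then the dual function F^o is differentiable at every point x ≠ 0, and the following inversion identities hold: F^o(x) · ∇F̃(∇F^o(x)) = x for every x ≠ 0, and F̃(ξ) · ∇F^o(∇F̃(ξ)) = ξ for every unit vector ξ. -/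
open RealInnerProductSpace

noncomputable section

set_option linter.unusedSectionVars false
set_option linter.unusedVariables false

namespace MinkAux

variable {n : ℕ} {F : Euc n → ℝ}

section basics
variable (hsm : ContDiffOn ℝ (⊤ : ℕ∞) F {0}ᶜ)
  (hhom : ∀ s : ℝ, 0 < s → ∀ x : Euc n, F (s • x) = s * F x)
  (hpos : ∀ x : Euc n, x ≠ 0 → 0 < F x)

include hsm in
lemma smoothAt {x : Euc n} (hx : x ≠ 0) : ContDiffAt ℝ (⊤ : ℕ∞) F x :=
  hsm.contDiffAt (isOpen_compl_singleton.mem_nhds hx)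

include hsm in
lemma diffAt {x : Euc n} (hx : x ≠ 0) : DifferentiableAt ℝ F x :=
  (smoothAt hsm hx).differentiableAt (by simp)

include hsm hhom in
lemma euler {x : Euc n} (hx : x ≠ 0) : fderiv ℝ F x x = F x := by
  have hsx : HasDerivAt (fun s : ℝ => s • x) ((1:ℝ) • x) 1 :=
    (hasDerivAt_id (1:ℝ)).smul_const x
  have hF' : HasFDerivAt F (fderiv ℝ F x) ((1:ℝ) • x) := by
    rw [one_smul]; exact (diffAt hsm hx).hasFDerivAt
  have h1 : HasDerivAt (fun s : ℝ => F (s • x)) (fderiv ℝ F x ((1:ℝ) • x)) 1 :=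
    hF'.comp_hasDerivAt 1 hsx
  rw [one_smul] at h1
  have h2 : HasDerivAt (fun s : ℝ => F (s • x)) (F x) 1 := by
    have hmul : HasDerivAt (fun s : ℝ => s * F x) (F x) 1 := by
      simpa using (hasDerivAt_id (1:ℝ)).mul_const (F x)
    refine hmul.congr_of_eventuallyEq ?_
    filter_upwards [eventually_gt_nhds (show (0:ℝ) < 1 by norm_num)] with s hs
    exact hhom s hs x
  exact h1.unique h2

include hsm hhom in
lemma grad0hom {s : ℝ} (hs : 0 < s) {x : Euc n} (hx : x ≠ 0) :
    fderiv ℝ F (s • x) = fderiv ℝ F x := by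
  have hsx : s • x ≠ 0 := smul_ne_zero (ne_of_gt hs) hx
  have h1 : HasFDerivAt (fun y : Euc n => F (s • y))
      ((fderiv ℝ F (s • x)).comp (s • ContinuousLinearMap.id ℝ (Euc n))) x := by
    have hlin : HasFDerivAt (fun y : Euc n => s • y)
        (s • ContinuousLinearMap.id ℝ (Euc n)) x :=
      (ContinuousLinearMap.hasFDerivAt _ : HasFDerivAt
        (fun y : Euc n => (s • ContinuousLinearMap.id ℝ (Euc n)) y) _ x)
    exact ((diffAt hsm hsx).hasFDerivAt).comp x hlin
  have h2 : HasFDerivAt (fun y : Euc n => F (s • y)) (s • fderiv ℝ F x) x := by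
    have hmul : HasFDerivAt (fun y : Euc n => s * F y) (s • fderiv ℝ F x) x :=
      ((diffAt hsm hx).hasFDerivAt).const_mul s
    refine hmul.congr_of_eventuallyEq ?_
    filter_upwards with y
    exact hhom s hs y
  have heq := h1.unique h2
  ext v
  have hv := ContinuousLinearMap.ext_iff.mp heq v
  simp only [ContinuousLinearMap.coe_comp', Function.comp_apply,
    ContinuousLinearMap.smul_apply, ContinuousLinearMap.coe_smul',
    Pi.smul_apply, ContinuousLinearMap.coe_id', id_eq, smul_eq_mul] at hv
  have hv2 : s * (fderiv ℝ F (s • x)) v = s * (fderiv ℝ F x) v := by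
    simpa [map_smul, smul_eq_mul] using hv
  exact mul_left_cancel₀ (ne_of_gt hs) hv2

include hsm hhom in
lemma subgrad (hconv : ConvexOn ℝ Set.univ F) {x : Euc n} (hx : x ≠ 0) (y : Euc n) :
    fderiv ℝ F x y ≤ F y := by
  set h : ℝ → ℝ := fun t => F (x + t • (y - x)) with hh
  have hd : HasDerivAt h (fderiv ℝ F x (y - x)) 0 := by
    have hlin : HasDerivAt (fun t : ℝ => x + t • (y - x)) ((1:ℝ) • (y - x)) 0 :=
      ((hasDerivAt_id (0:ℝ)).smul_const (y - x)).const_add x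
    have hF' : HasFDerivAt F (fderiv ℝ F x) (x + (0:ℝ) • (y - x)) := by
      rw [zero_smul, add_zero]; exact (diffAt hsm hx).hasFDerivAt
    have := hF'.comp_hasDerivAt 0 hlin
    rw [one_smul] at this; exact this
  have hslope : ∀ t ∈ Set.Ioc (0:ℝ) 1, slope h 0 t ≤ F y - F x := by
    intro t ht
    have hc := hconv.2 (Set.mem_univ x) (Set.mem_univ y)
      (by linarith [ht.2] : (0:ℝ) ≤ 1 - t) (le_of_lt ht.1) (by ring)
    have heq : (1 - t) • x + t • y = x + t • (y - x) := by module
    rw [heq] at hc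
    have hct : h t ≤ (1 - t) * F x + t * F y := by simpa [hh, smul_eq_mul] using hc
    have h0 : h 0 = F x := by simp [hh]
    simp only [slope, vsub_eq_sub, sub_zero, h0, smul_eq_mul]
    rw [inv_mul_le_iff₀ ht.1]
    nlinarith [ht.1.le]
  have htend : Filter.Tendsto (slope h 0) (nhdsWithin 0 (Set.Ioi 0))
      (nhds (fderiv ℝ F x (y - x))) :=
    (hasDerivAt_iff_tendsto_slope.mp hd).mono_left
      (nhdsWithin_mono _ (fun t ht => ne_of_gt ht))
  have hle : fderiv ℝ F x (y - x) ≤ F y - F x := by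
    refine le_of_tendsto htend ?_
    filter_upwards [Ioc_mem_nhdsGT_of_mem (by constructor <;> norm_num :
      (0:ℝ) ∈ Set.Ico 0 1)] with t ht
    exact hslope t ht
  have hE := euler hsm hhom hx
  have hsub : fderiv ℝ F x y - fderiv ℝ F x x ≤ F y - F x := by
    rw [← (fderiv ℝ F x).map_sub]; exact hle
  linarith [hsub, hE.le, hE.ge]

include hsm hpos in
lemma dual_max (x : Euc n) : (∃ ξ : Euc n, ‖ξ‖ = 1 ∧ dualF n F x = ⟪x, ξ⟫ / F ξ) ∧
    ∀ η : Euc n, ‖η‖ = 1 → ⟪x, η⟫ / F η ≤ dualF n F x := by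
  have hset : {r : ℝ | ∃ ξ : Euc n, ‖ξ‖ = 1 ∧ r = ⟪x, ξ⟫ / F ξ} =
      (fun ξ : Euc n => ⟪x, ξ⟫ / F ξ) '' Metric.sphere 0 1 := by
    ext r
    simp only [Set.mem_setOf_eq, Set.mem_image, mem_sphere_zero_iff_norm]
    constructor
    · rintro ⟨ξ, h1, h2⟩; exact ⟨ξ, h1, h2.symm⟩
    · rintro ⟨ξ, h1, h2⟩; exact ⟨ξ, h1, h2.symm⟩
  have hsub : Metric.sphere (0 : Euc n) 1 ⊆ {0}ᶜ := by
    intro ξ hξ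
    simp only [mem_sphere_zero_iff_norm] at hξ
    simp only [Set.mem_compl_iff, Set.mem_singleton_iff]
    intro h; rw [h] at hξ; simp at hξ
  have hcont : ContinuousOn (fun ξ : Euc n => ⟪x, ξ⟫ / F ξ) (Metric.sphere 0 1) := by
    apply ContinuousOn.div
    · exact (continuous_const.inner continuous_id).continuousOn
    · exact (hsm.continuousOn).mono hsub
    · intro ξ hξ
      exact ne_of_gt (hpos ξ (hsub hξ))
  have hK : IsCompact ((fun ξ : Euc n => ⟪x, ξ⟫ / F ξ) '' Metric.sphere 0 1) :=
    (isCompact_sphere (0 : Euc n) 1).image_of_continuousOn hcont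
  have hne : ((fun ξ : Euc n => ⟪x, ξ⟫ / F ξ) '' Metric.sphere 0 1).Nonempty :=
    (NormedSpace.sphere_nonempty.mpr zero_le_one).image _
  constructor
  · have := hK.sSup_mem hne
    rw [dualF, hset]
    obtain ⟨ξ, hξ1, hξ2⟩ := this
    exact ⟨ξ, by simpa using hξ1, hξ2.symm⟩
  · intro η hη
    rw [dualF, hset]
    exact le_csSup hK.bddAbove ⟨η, by simpa using hη, rfl⟩

include hsm hpos in
lemma dual_hom {s : ℝ} (hs : 0 < s) (x : Euc n) :
    dualF n F (s • x) = s * dualF n F x := by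
  obtain ⟨⟨ξ, hξ1, hξ2⟩, hub⟩ := dual_max hsm hpos (s • x)
  obtain ⟨⟨ξ', hξ'1, hξ'2⟩, hub'⟩ := dual_max hsm hpos x
  apply le_antisymm
  · rw [hξ2, real_inner_smul_left, mul_div_assoc]
    exact mul_le_mul_of_nonneg_left (hub' ξ hξ1) hs.le
  · have := hub ξ' hξ'1
    rw [real_inner_smul_left, mul_div_assoc] at this
    rw [hξ'2]
    exact this

include hsm in
lemma inner_grad {x : Euc n} (hx : x ≠ 0) (v : Euc n) :
    ⟪gradient F x, v⟫ = fderiv ℝ F x v := by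
  have h1 : HasGradientAt F (gradient F x) x := (diffAt hsm hx).hasGradientAt
  have h2 := h1.hasFDerivAt.unique (diffAt hsm hx).hasFDerivAt
  rw [← h2, InnerProductSpace.toDual_apply_apply]

include hsm hhom in
lemma grad_smul_eq {s : ℝ} (hs : 0 < s) {x : Euc n} (hx : x ≠ 0) :
    gradient F (s • x) = gradient F x := by
  have hsx : s • x ≠ 0 := smul_ne_zero (ne_of_gt hs) hx
  apply ext_inner_right ℝ
  intro v
  rw [inner_grad hsm hsx, inner_grad hsm hx, grad0hom hsm hhom hs hx]

include hsm in
lemma grad_contDiffAt {x : Euc n} (hx : x ≠ 0) :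
    ContDiffAt ℝ (⊤ : ℕ∞) (gradient F) x := by
  have h1 : ContDiffAt ℝ (⊤ : ℕ∞) (fderiv ℝ F) x :=
    (smoothAt hsm hx).fderiv_right (by simp)
  have : gradient F = (fun L => (InnerProductSpace.toDual ℝ (Euc n)).symm L) ∘ fderiv ℝ F :=
    rfl
  rw [this]
  exact ((InnerProductSpace.toDual ℝ (Euc n)).symm.contDiff.contDiffAt).comp x h1

include hsm in
lemma grad_diffAt {x : Euc n} (hx : x ≠ 0) : DifferentiableAt ℝ (gradient F) x :=
  (grad_contDiffAt hsm hx).differentiableAt (by simp)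

include hsm in
lemma hess_inner {x : Euc n} (hx : x ≠ 0) (v w : Euc n) :
    ⟪fderiv ℝ (gradient F) x v, w⟫ = fderiv ℝ (fderiv ℝ F) x v w := by
  have hgrad : gradient F =
      (InnerProductSpace.toDual ℝ (Euc n)).symm ∘ fderiv ℝ F := rfl
  have := (InnerProductSpace.toDual ℝ (Euc n)).symm.comp_fderiv
    (f := fderiv ℝ F) (x := x)
  rw [hgrad, this]
  show ⟪(InnerProductSpace.toDual ℝ (Euc n)).symm ((fderiv ℝ (fderiv ℝ F) x) v), w⟫ = _
  exact InnerProductSpace.toDual_symm_apply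

include hsm in
lemma hess_symm {x : Euc n} (hx : x ≠ 0) (v w : Euc n) :
    fderiv ℝ (fderiv ℝ F) x v w = fderiv ℝ (fderiv ℝ F) x w v := by
  apply second_derivative_symmetric_of_eventually (f := F) (x := x)
  · filter_upwards [isOpen_compl_singleton.mem_nhds hx] with y hy
    exact (diffAt hsm hy).hasFDerivAt
  · exact (((smoothAt hsm hx).fderiv_right (m := 1) (by exact WithTop.coe_le_coe.mpr le_top)).differentiableAt one_ne_zero).hasFDerivAt

include hsm hhom in
lemma hess_self {x : Euc n} (hx : x ≠ 0) : fderiv ℝ (fderiv ℝ F) x x = 0 := by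
  have hsx : HasDerivAt (fun s : ℝ => s • x) ((1:ℝ) • x) 1 :=
    (hasDerivAt_id (1:ℝ)).smul_const x
  have hF' : HasFDerivAt (fderiv ℝ F) (fderiv ℝ (fderiv ℝ F) x) ((1:ℝ) • x) := by
    rw [one_smul]
    exact (((smoothAt hsm hx).fderiv_right (m := 1) (by exact WithTop.coe_le_coe.mpr le_top)).differentiableAt one_ne_zero).hasFDerivAt
  have h1 : HasDerivAt (fun s : ℝ => fderiv ℝ F (s • x))
      (fderiv ℝ (fderiv ℝ F) x ((1:ℝ) • x)) 1 := hF'.comp_hasDerivAt 1 hsx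
  rw [one_smul] at h1
  have h2 : HasDerivAt (fun s : ℝ => fderiv ℝ F (s • x)) 0 1 := by
    refine (hasDerivAt_const 1 (fderiv ℝ F x)).congr_of_eventuallyEq ?_
    filter_upwards [eventually_gt_nhds (show (0:ℝ) < 1 by norm_num)] with s hs
    exact grad0hom hsm hhom hs hx
  have := h1.unique h2
  rw [this]

end basics

/-- The map `Ψ(y) = F(y) • ∇F(y) = ∇(F²/2)(y)`. -/
def Psi (F : Euc n → ℝ) : Euc n → Euc n := fun y => F y • gradient F y

section psi
variable (hsm : ContDiffOn ℝ (⊤ : ℕ∞) F {0}ᶜ)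
  (hhom : ∀ s : ℝ, 0 < s → ∀ x : Euc n, F (s • x) = s * F x)
  (hpos : ∀ x : Euc n, x ≠ 0 → 0 < F x)

include hsm in
lemma psi_contDiffAt {x : Euc n} (hx : x ≠ 0) : ContDiffAt ℝ (⊤ : ℕ∞) (Psi F) x :=
  (smoothAt hsm hx).smul (grad_contDiffAt hsm hx)

include hsm in
lemma psi_diffAt {x : Euc n} (hx : x ≠ 0) : DifferentiableAt ℝ (Psi F) x :=
  (psi_contDiffAt hsm hx).differentiableAt (by simp)

include hsm in
lemma psi_hasFDerivAt {x : Euc n} (hx : x ≠ 0) :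
    HasFDerivAt (Psi F)
      (F x • fderiv ℝ (gradient F) x + (fderiv ℝ F x).smulRight (gradient F x)) x :=
  ((diffAt hsm hx).hasFDerivAt).smul ((grad_diffAt hsm hx).hasFDerivAt)

include hsm in
lemma psi_fderiv_inner {x : Euc n} (hx : x ≠ 0) (v w : Euc n) :
    ⟪fderiv ℝ (Psi F) x v, w⟫ =
      F x * fderiv ℝ (fderiv ℝ F) x v w + fderiv ℝ F x v * fderiv ℝ F x w := by
  rw [(psi_hasFDerivAt hsm hx).fderiv]
  simp only [ContinuousLinearMap.add_apply, ContinuousLinearMap.smul_apply,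
    ContinuousLinearMap.smulRight_apply]
  rw [inner_add_left, real_inner_smul_left, real_inner_smul_left,
    hess_inner hsm hx, inner_grad hsm hx]

include hsm in
lemma psi_fderiv_symm {x : Euc n} (hx : x ≠ 0) (v w : Euc n) :
    ⟪fderiv ℝ (Psi F) x v, w⟫ = ⟪fderiv ℝ (Psi F) x w, v⟫ := by
  rw [psi_fderiv_inner hsm hx, psi_fderiv_inner hsm hx, hess_symm hsm hx, mul_comm (fderiv ℝ F x v)]

include hsm hhom in
lemma psi_hom {s : ℝ} (hs : 0 < s) {x : Euc n} (hx : x ≠ 0) :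
    Psi F (s • x) = s • Psi F x := by
  unfold Psi
  rw [hhom s hs x, grad_smul_eq hsm hhom hs hx, mul_smul]

include hsm hhom in
lemma psi_fderiv_smul {s : ℝ} (hs : 0 < s) {x : Euc n} (hx : x ≠ 0) :
    fderiv ℝ (Psi F) (s • x) = fderiv ℝ (Psi F) x := by
  have hsx : s • x ≠ 0 := smul_ne_zero (ne_of_gt hs) hx
  have h1 : HasFDerivAt (fun y : Euc n => Psi F (s • y))
      ((fderiv ℝ (Psi F) (s • x)).comp (s • ContinuousLinearMap.id ℝ (Euc n))) x := by
    have hlin : HasFDerivAt (fun y : Euc n => s • y)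
        (s • ContinuousLinearMap.id ℝ (Euc n)) x :=
      (ContinuousLinearMap.hasFDerivAt _ : HasFDerivAt
        (fun y : Euc n => (s • ContinuousLinearMap.id ℝ (Euc n)) y) _ x)
    exact ((psi_diffAt hsm hsx).hasFDerivAt).comp x hlin
  have h2 : HasFDerivAt (fun y : Euc n => Psi F (s • y)) (s • fderiv ℝ (Psi F) x) x := by
    have hmul : HasFDerivAt (fun y : Euc n => s • Psi F y) (s • fderiv ℝ (Psi F) x) x :=
      ((psi_diffAt hsm hx).hasFDerivAt).const_smul s
    refine hmul.congr_of_eventuallyEq ?_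
    filter_upwards [isOpen_compl_singleton.mem_nhds hx] with y hy
    exact psi_hom hsm hhom hs hy
  have heq := h1.unique h2
  refine ContinuousLinearMap.ext fun v => ?_
  have hv := ContinuousLinearMap.ext_iff.mp heq v
  simp only [ContinuousLinearMap.coe_comp', Function.comp_apply,
    ContinuousLinearMap.smul_apply, ContinuousLinearMap.coe_smul',
    Pi.smul_apply, ContinuousLinearMap.coe_id', id_eq] at hv
  rw [map_smul] at hv
  exact smul_right_injective (Euc n) (ne_of_gt hs) hv

include hsm hhom in
lemma psi_euler {x : Euc n} (hx : x ≠ 0) : fderiv ℝ (Psi F) x x = Psi F x := by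
  have hsx : HasDerivAt (fun s : ℝ => s • x) ((1:ℝ) • x) 1 :=
    (hasDerivAt_id (1:ℝ)).smul_const x
  have hF' : HasFDerivAt (Psi F) (fderiv ℝ (Psi F) x) ((1:ℝ) • x) := by
    rw [one_smul]; exact (psi_diffAt hsm hx).hasFDerivAt
  have h1 : HasDerivAt (fun s : ℝ => Psi F (s • x)) (fderiv ℝ (Psi F) x ((1:ℝ) • x)) 1 :=
    by have := hF'.comp_hasDerivAt 1 hsx; exact this
  rw [one_smul] at h1
  have h2 : HasDerivAt (fun s : ℝ => Psi F (s • x)) (Psi F x) 1 := by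
    have hmul : HasDerivAt (fun s : ℝ => s • Psi F x) ((1:ℝ) • Psi F x) 1 :=
      (hasDerivAt_id (1:ℝ)).smul_const (Psi F x)
    rw [one_smul] at hmul
    refine hmul.congr_of_eventuallyEq ?_
    filter_upwards [eventually_gt_nhds (show (0:ℝ) < 1 by norm_num)] with s hs
    exact psi_hom hsm hhom hs hx
  exact h1.unique h2

include hsm hhom hpos in
lemma psi_pos_unit (hell : Elliptic n F) {x : Euc n} (hx1 : ‖x‖ = 1)
    {v : Euc n} (hv : v ≠ 0) : 0 < ⟪fderiv ℝ (Psi F) x v, v⟫ := by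
  have hx : x ≠ 0 := by intro h; rw [h] at hx1; simp at hx1
  set a : ℝ := ⟪x, v⟫ with ha
  set w : Euc n := v - a • x with hw
  have hvw : v = w + a • x := by rw [hw]; abel
  have hworth : ⟪x, w⟫ = 0 := by
    rw [hw, inner_sub_right, real_inner_smul_right, real_inner_self_eq_norm_mul_norm, hx1]
    ring
  set H := fderiv ℝ (fderiv ℝ F) x with hH
  have hHx : ∀ u, H x u = 0 := by
    intro u
    have h0 := hess_self hsm hhom hx (F := F)
    rw [hH, h0]
    rfl
  have hHvv : H v v = H w w := by
    rw [hvw]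
    rw [map_add, map_smul]
    simp only [ContinuousLinearMap.add_apply, ContinuousLinearMap.smul_apply, smul_eq_mul,
      map_add, map_smul]
    have h1 : H w x = H x w := hess_symm hsm hx w x
    rw [h1, hHx]
    simp [hHx]
  have hLv : fderiv ℝ F x v = ⟪gradient F x, v⟫ := (inner_grad hsm hx v).symm
  rw [psi_fderiv_inner hsm hx]
  rw [← hH, hHvv]
  by_cases hw0 : w = 0
  · have hva : v = a • x := by rw [hvw, hw0]; simp
    have ha0 : a ≠ 0 := by
      intro h; rw [h, zero_smul] at hva; exact hv hva
    have hfv : fderiv ℝ F x v = a * F x := by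
      rw [hva, map_smul, smul_eq_mul, euler hsm hhom hx]
    have hFx : 0 < F x := hpos x hx
    rw [hw0, hfv]
    simp only [map_zero, ContinuousLinearMap.zero_apply]
    rw [mul_zero, zero_add]
    exact mul_self_pos.mpr (mul_ne_zero ha0 (ne_of_gt hFx))
  · have hell2 := hell x w hx1 hw0 hworth
    rw [iteratedFDeriv_two_apply] at hell2
    simp only [Matrix.cons_val_zero, Matrix.cons_val_one, Matrix.head_cons] at hell2
    have hFx : 0 < F x := hpos x hx
    nlinarith [mul_self_nonneg (fderiv ℝ F x v)]

include hsm hhom hpos in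
lemma psi_pos (hell : Elliptic n F) {x : Euc n} (hx : x ≠ 0)
    {v : Euc n} (hv : v ≠ 0) : 0 < ⟪fderiv ℝ (Psi F) x v, v⟫ := by
  have hn : (0:ℝ) < ‖x‖ := norm_pos_iff.mpr hx
  set u : Euc n := ‖x‖⁻¹ • x with hu
  have hu1 : ‖u‖ = 1 := by
    rw [hu, norm_smul]; simp [abs_of_pos (inv_pos.mpr hn), inv_mul_cancel₀ (ne_of_gt hn)]
  have hu0 : u ≠ 0 := by
    intro h; rw [h] at hu1; simp at hu1
  have hxu : x = ‖x‖ • u := by rw [hu, smul_inv_smul₀ (ne_of_gt hn)]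
  have : fderiv ℝ (Psi F) x = fderiv ℝ (Psi F) u := by
    conv_lhs => rw [hxu]
    exact psi_fderiv_smul hsm hhom hn hu0
  rw [this]
  exact psi_pos_unit hsm hhom hpos hell hu1 hv

include hsm hhom hpos in
lemma dual_grad_one (hconv : ConvexOn ℝ Set.univ F) {x : Euc n} (hx : x ≠ 0) :
    dualF n F (gradient F x) = 1 := by
  set g : Euc n := gradient F x with hg
  obtain ⟨⟨ξ, hξ1, hξ2⟩, hub⟩ := dual_max hsm hpos g
  have hξ0 : ξ ≠ 0 := by intro h; rw [h] at hξ1; simp at hξ1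
  apply le_antisymm
  · rw [hξ2]
    rw [div_le_one (hpos ξ hξ0)]
    rw [hg, inner_grad hsm hx]
    exact subgrad hsm hhom hconv hx ξ
  · have hn : (0:ℝ) < ‖x‖ := norm_pos_iff.mpr hx
    set u : Euc n := ‖x‖⁻¹ • x with hu
    have hu1 : ‖u‖ = 1 := by
      rw [hu, norm_smul]; simp [abs_of_pos (inv_pos.mpr hn), inv_mul_cancel₀ (ne_of_gt hn)]
    have h1 := hub u hu1
    have h2 : ⟪g, u⟫ = ‖x‖⁻¹ * F x := by
      rw [hg, hu, inner_grad hsm hx, map_smul, smul_eq_mul, euler hsm hhom hx]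
    have h3 : F u = ‖x‖⁻¹ * F x := hhom _ (inv_pos.mpr hn) x
    rw [h2, h3, div_self (ne_of_gt (mul_pos (inv_pos.mpr hn) (hpos x hx)))] at h1
    exact h1

include hsm hhom hpos in
lemma dual_psi (hconv : ConvexOn ℝ Set.univ F) {x : Euc n} (hx : x ≠ 0) :
    dualF n F (Psi F x) = F x := by
  have : Psi F x = F x • gradient F x := rfl
  rw [this, dual_hom hsm hpos (hpos x hx), dual_grad_one hsm hhom hpos hconv hx, mul_one]

include hsm hhom hpos in
lemma psi_equiv (hell : Elliptic n F) {x : Euc n} (hx : x ≠ 0) :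
    ∃ e : Euc n ≃L[ℝ] Euc n, (e : Euc n →L[ℝ] Euc n) = fderiv ℝ (Psi F) x := by
  set A := fderiv ℝ (Psi F) x with hA
  have hinj : Function.Injective A := by
    intro v w hvw
    by_contra hne
    have hv0 : v - w ≠ 0 := sub_ne_zero.mpr hne
    have := psi_pos hsm hhom hpos hell hx hv0
    rw [← hA, map_sub, hvw, sub_self] at this
    simp at this
  have hinj' : Function.Injective (A : Euc n →ₗ[ℝ] Euc n) := hinj
  have hsurj : Function.Surjective (A : Euc n →ₗ[ℝ] Euc n) :=
    LinearMap.injective_iff_surjective.mp hinj'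
  refine ⟨ContinuousLinearEquiv.ofBijective A
    (LinearMap.ker_eq_bot.mpr hinj) (LinearMap.range_eq_top.mpr hsurj), ?_⟩
  exact ContinuousLinearEquiv.coe_ofBijective _ _ _

include hsm hhom hpos in
lemma local_pkg (hell : Elliptic n F) (hconv : ConvexOn ℝ Set.univ F)
    {ξ : Euc n} (hξ : ξ ≠ 0) :
    DifferentiableAt ℝ (dualF n F) (Psi F ξ) ∧
      gradient (dualF n F) (Psi F ξ) = (F ξ)⁻¹ • ξ := by
  obtain ⟨e, he⟩ := psi_equiv hsm hhom hpos hell hξ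
  have hstrict : HasStrictFDerivAt (Psi F) (e : Euc n →L[ℝ] Euc n) ξ := by
    rw [he]
    exact (psi_contDiffAt hsm hξ).hasStrictFDerivAt (by simp)
  set g := hstrict.localInverse (Psi F) _ _ with hgdef
  have hgξ : g (Psi F ξ) = ξ := hstrict.localInverse_apply_image
  have hgd : HasFDerivAt g (e.symm : Euc n →L[ℝ] Euc n) (Psi F ξ) :=
    hstrict.to_localInverse.hasFDerivAt
  have hgne : ∀ᶠ y in nhds (Psi F ξ), g y ≠ 0 := by
    have ht : Filter.Tendsto g (nhds (Psi F ξ)) (nhds ξ) := hstrict.localInverse_tendsto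
    exact ht.eventually (eventually_ne_nhds hξ)
  have heq : dualF n F =ᶠ[nhds (Psi F ξ)] (F ∘ g) := by
    filter_upwards [hstrict.eventually_right_inverse, hgne] with y h1 h2
    have : dualF n F (Psi F (g y)) = F (g y) := dual_psi hsm hhom hpos hconv h2
    rw [h1] at this
    exact this
  have hFg : HasFDerivAt (F ∘ g) ((fderiv ℝ F ξ).comp (e.symm : Euc n →L[ℝ] Euc n))
      (Psi F ξ) := by
    have h1 : HasFDerivAt F (fderiv ℝ F ξ) (g (Psi F ξ)) := by
      rw [hgξ]; exact (diffAt hsm hξ).hasFDerivAt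
    exact h1.comp _ hgd
  have hFo : HasFDerivAt (dualF n F) ((fderiv ℝ F ξ).comp (e.symm : Euc n →L[ℝ] Euc n))
      (Psi F ξ) := hFg.congr_of_eventuallyEq heq
  constructor
  · exact hFo.differentiableAt
  · have hgrad : HasGradientAt (dualF n F) ((F ξ)⁻¹ • ξ) (Psi F ξ) := by
      rw [hasGradientAt_iff_hasFDerivAt]
      refine hFo.congr_fderiv (Eq.symm ?_)
      refine ContinuousLinearMap.ext fun v => ?_
      have hw : v = fderiv ℝ (Psi F) ξ (e.symm v) := by
        conv_lhs => rw [← e.apply_symm_apply v]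
        rw [← he]; rfl
      have hsym : ⟪fderiv ℝ (Psi F) ξ (e.symm v), ξ⟫ = ⟪fderiv ℝ (Psi F) ξ ξ, e.symm v⟫ :=
        psi_fderiv_symm hsm hξ _ _
      have heul : fderiv ℝ (Psi F) ξ ξ = Psi F ξ := psi_euler hsm hhom hξ
      have hFξ : (0:ℝ) < F ξ := hpos ξ hξ
      have hinner : ⟪Psi F ξ, e.symm v⟫ = F ξ * fderiv ℝ F ξ (e.symm v) := by
        show ⟪F ξ • gradient F ξ, e.symm v⟫ = _
        rw [real_inner_smul_left, inner_grad hsm hξ]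
      have : (InnerProductSpace.toDual ℝ (Euc n)) ((F ξ)⁻¹ • ξ) v = ⟪(F ξ)⁻¹ • ξ, v⟫ :=
        InnerProductSpace.toDual_apply_apply
      rw [this]
      show ⟪(F ξ)⁻¹ • ξ, v⟫ = fderiv ℝ F ξ (e.symm v)
      rw [real_inner_smul_left]
      conv_lhs => rw [hw]
      rw [real_inner_comm, hsym, heul, hinner]
      field_simp
    exact hgrad.gradient

end psi

section surj
variable (hsm : ContDiffOn ℝ (⊤ : ℕ∞) F {0}ᶜ)
  (hhom : ∀ s : ℝ, 0 < s → ∀ x : Euc n, F (s • x) = s * F x)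
  (hpos : ∀ x : Euc n, x ≠ 0 → 0 < F x)

lemma unit_ne_zero {u : Euc n} (hu : ‖u‖ = 1) : u ≠ 0 := by
  intro h; rw [h] at hu; simp at hu

include hsm hpos in
lemma sphere_min : ∃ c : ℝ, 0 < c ∧ ∀ ξ : Euc n, ‖ξ‖ = 1 → c ≤ F ξ := by
  have hsub : Metric.sphere (0 : Euc n) 1 ⊆ {0}ᶜ := by
    intro ξ hξ
    simp only [mem_sphere_zero_iff_norm] at hξ
    exact unit_ne_zero hξ
  obtain ⟨ξ0, hξ0, hmin⟩ := (isCompact_sphere (0 : Euc n) 1).exists_isMinOn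
    (NormedSpace.sphere_nonempty.mpr zero_le_one) ((hsm.continuousOn).mono hsub)
  refine ⟨F ξ0, hpos ξ0 (hsub hξ0), fun ξ hξ => ?_⟩
  exact hmin (by simpa using hξ)

include hsm in
lemma sphere_maxPsi : ∃ M : ℝ, 0 < M ∧ ∀ ξ : Euc n, ‖ξ‖ = 1 → ‖Psi F ξ‖ ≤ M := by
  have hsub : Metric.sphere (0 : Euc n) 1 ⊆ {0}ᶜ := by
    intro ξ hξ
    simp only [mem_sphere_zero_iff_norm] at hξ
    exact unit_ne_zero hξ
  have hcont : ContinuousOn (fun ξ : Euc n => ‖Psi F ξ‖) (Metric.sphere 0 1) := by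
    intro ξ hξ
    exact (((psi_contDiffAt hsm (hsub hξ)).continuousAt).norm).continuousWithinAt
  obtain ⟨ξ0, hξ0, hmax⟩ := (isCompact_sphere (0 : Euc n) 1).exists_isMaxOn
    (NormedSpace.sphere_nonempty.mpr zero_le_one) hcont
  refine ⟨‖Psi F ξ0‖ + 1, by positivity, fun ξ hξ => ?_⟩
  have h := hmax (by simpa using hξ)
  simp only [Set.mem_setOf_eq] at h
  linarith

include hsm hhom in
lemma inner_psi_self {x : Euc n} (hx : x ≠ 0) : ⟪Psi F x, x⟫ = F x * F x := by
  show ⟪F x • gradient F x, x⟫ = _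
  rw [real_inner_smul_left, inner_grad hsm hx, euler hsm hhom hx]

include hsm hhom hpos in
lemma psi_lower {c : ℝ} (hc : 0 < c) (hcF : ∀ ξ : Euc n, ‖ξ‖ = 1 → c ≤ F ξ)
    {x : Euc n} (hx : x ≠ 0) : c ^ 2 * ‖x‖ ≤ ‖Psi F x‖ := by
  have hn : (0:ℝ) < ‖x‖ := norm_pos_iff.mpr hx
  set u : Euc n := ‖x‖⁻¹ • x with hu
  have hu1 : ‖u‖ = 1 := by
    rw [hu, norm_smul]; simp [abs_of_pos (inv_pos.mpr hn), inv_mul_cancel₀ (ne_of_gt hn)]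
  have hxu : x = ‖x‖ • u := by rw [hu, smul_inv_smul₀ (ne_of_gt hn)]
  have hFx : F x = ‖x‖ * F u := by conv_lhs => rw [hxu, hhom _ hn u]
  have h1 : c * ‖x‖ ≤ F x := by
    rw [hFx]
    nlinarith [hcF u hu1, hn.le]
  have h2 : F x * F x ≤ ‖Psi F x‖ * ‖x‖ := by
    rw [← inner_psi_self hsm hhom hx]
    exact le_trans (real_inner_le_norm _ _) (le_refl _)
  nlinarith [norm_nonneg (Psi F x), hn, mul_le_mul h1 h1 (by positivity) (le_trans (by positivity) h1)]

include hsm hhom in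
lemma psi_upper {M : ℝ} (hM : 0 < M) (hMP : ∀ ξ : Euc n, ‖ξ‖ = 1 → ‖Psi F ξ‖ ≤ M)
    {x : Euc n} (hx : x ≠ 0) : ‖Psi F x‖ ≤ M * ‖x‖ := by
  have hn : (0:ℝ) < ‖x‖ := norm_pos_iff.mpr hx
  set u : Euc n := ‖x‖⁻¹ • x with hu
  have hu1 : ‖u‖ = 1 := by
    rw [hu, norm_smul]; simp [abs_of_pos (inv_pos.mpr hn), inv_mul_cancel₀ (ne_of_gt hn)]
  have hxu : x = ‖x‖ • u := by rw [hu, smul_inv_smul₀ (ne_of_gt hn)]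
  calc ‖Psi F x‖ = ‖Psi F (‖x‖ • u)‖ := by rw [← hxu]
  _ = ‖x‖ * ‖Psi F u‖ := by
      rw [psi_hom hsm hhom hn (unit_ne_zero hu1), norm_smul, Real.norm_eq_abs,
        abs_of_pos hn]
  _ ≤ ‖x‖ * M := mul_le_mul_of_nonneg_left (hMP u hu1) hn.le
  _ = M * ‖x‖ := mul_comm _ _

include hsm hhom hpos in
lemma psi_ne_zero {x : Euc n} (hx : x ≠ 0) : Psi F x ≠ 0 := by
  intro h
  have := inner_psi_self hsm hhom hx
  rw [h] at this
  simp only [inner_zero_left] at this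
  have hFx := hpos x hx
  nlinarith

include hsm hhom hpos in
lemma psi_surj (hn1 : 1 ≤ n) (hell : Elliptic n F) {x : Euc n} (hx : x ≠ 0) :
    ∃ ξ : Euc n, ξ ≠ 0 ∧ Psi F ξ = x := by
  obtain ⟨c, hc, hcF⟩ := sphere_min hsm hpos
  obtain ⟨M, hM, hMP⟩ := sphere_maxPsi hsm
  set S : Set (Euc n) := Psi F '' {0}ᶜ with hS
  -- S is open
  have hSopen : IsOpen S := by
    rw [isOpen_iff_mem_nhds]
    rintro y ⟨ξ, hξ, rfl⟩
    have hξ0 : ξ ≠ 0 := hξ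
    obtain ⟨e, he⟩ := psi_equiv hsm hhom hpos hell hξ0
    have hstrict : HasStrictFDerivAt (Psi F) (e : Euc n →L[ℝ] Euc n) ξ := by
      rw [he]; exact (psi_contDiffAt hsm hξ0).hasStrictFDerivAt (by simp)
    have hmap := hstrict.map_nhds_eq_of_equiv
    rw [← hmap, Filter.mem_map]
    exact Filter.mem_of_superset (isOpen_compl_singleton.mem_nhds hξ0)
      (fun z hz => ⟨z, hz, rfl⟩)
  -- S is relatively closed in {0}ᶜ
  have hclos : ∀ y : Euc n, y ∈ closure S → y ≠ 0 → y ∈ S := by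
    intro y hyc hy0
    have hny : (0:ℝ) < ‖y‖ := norm_pos_iff.mpr hy0
    set A : Set (Euc n) := {ξ | ‖y‖ / (2 * M) ≤ ‖ξ‖ ∧ ‖ξ‖ ≤ 2 * ‖y‖ / c ^ 2} with hA
    have hAclosed : IsClosed A := by
      have : A = (fun ξ : Euc n => ‖ξ‖) ⁻¹' (Set.Icc (‖y‖ / (2 * M)) (2 * ‖y‖ / c ^ 2)) := rfl
      rw [this]
      exact IsClosed.preimage continuous_norm isClosed_Icc
    have hAcomp : IsCompact A := by
      refine (isCompact_closedBall (0 : Euc n) (2 * ‖y‖ / c ^ 2)).of_isClosed_subset hAclosed ?_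
      intro ξ hξ
      simpa [Metric.mem_closedBall, dist_zero_right] using hξ.2
    have hAne : ∀ ξ ∈ A, ξ ≠ 0 := by
      intro ξ hξ h0
      rw [h0] at hξ
      have := hξ.1
      simp only [norm_zero] at this
      have : (0:ℝ) < ‖y‖ / (2 * M) := by positivity
      linarith [hξ.1, this]
    have hKcomp : IsCompact (Psi F '' A) := by
      refine hAcomp.image_of_continuousOn ?_
      intro ξ hξ
      exact ((psi_contDiffAt hsm (hAne ξ hξ)).continuousAt).continuousWithinAt
    set V : Set (Euc n) := {z | ‖y‖ / 2 < ‖z‖ ∧ ‖z‖ < 2 * ‖y‖} with hV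
    have hVopen : IsOpen V := by
      have : V = (fun z : Euc n => ‖z‖) ⁻¹' (Set.Ioo (‖y‖ / 2) (2 * ‖y‖)) := rfl
      rw [this]
      exact IsOpen.preimage continuous_norm isOpen_Ioo
    have hyV : y ∈ V := by
      constructor <;> [linarith; linarith]
    have hSV : S ∩ V ⊆ Psi F '' A := by
      rintro z ⟨⟨ξ, hξ, rfl⟩, hzV⟩
      have hξ0 : ξ ≠ 0 := hξ
      have hup := psi_upper hsm hhom hM hMP hξ0
      have hlo := psi_lower hsm hhom hpos hc hcF hξ0
      refine ⟨ξ, ⟨?_, ?_⟩, rfl⟩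
      · -- ‖y‖/(2M) ≤ ‖ξ‖
        have h1 : ‖y‖ / 2 < ‖Psi F ξ‖ := hzV.1
        have h2 : ‖Psi F ξ‖ ≤ M * ‖ξ‖ := hup
        rw [div_le_iff₀ (by positivity)]
        nlinarith
      · have h1 : ‖Psi F ξ‖ < 2 * ‖y‖ := hzV.2
        have h2 : c ^ 2 * ‖ξ‖ ≤ ‖Psi F ξ‖ := hlo
        rw [le_div_iff₀ (by positivity)]
        nlinarith
    have hyK : y ∈ Psi F '' A := by
      have hycl : y ∈ closure (S ∩ V) := by
        rw [mem_closure_iff_nhds] at hyc ⊢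
        intro U hU
        obtain ⟨z, hz1, hz2⟩ := hyc (U ∩ V) (Filter.inter_mem hU (hVopen.mem_nhds hyV))
        exact ⟨z, hz1.1, hz2, hz1.2⟩
      have := closure_mono hSV hycl
      rwa [hKcomp.isClosed.closure_eq] at this
    obtain ⟨ξ, hξA, hξy⟩ := hyK
    exact ⟨ξ, hAne ξ hξA, hξy⟩
  -- connectivity argument
  by_cases hxS : x ∈ S
  · obtain ⟨ξ, hξ, hξx⟩ := hxS
    exact ⟨ξ, hξ, hξx⟩
  exfalso
  have hrank : 1 < Module.rank ℝ (Euc n) := by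
    have h1 : Module.finrank ℝ (Euc n) = n + 1 := finrank_euclideanSpace_fin
    have h2 : (Module.finrank ℝ (Euc n) : Cardinal) = Module.rank ℝ (Euc n) :=
      Module.finrank_eq_rank ℝ (Euc n)
    rw [← h2, h1]
    have : (1 : Cardinal) = ((1 : ℕ) : Cardinal) := by simp
    rw [this, Nat.cast_lt]
    omega
  have hconn : IsPreconnected ({(0 : Euc n)}ᶜ : Set (Euc n)) :=
    (isConnected_compl_singleton_of_one_lt_rank hrank 0).isPreconnected
  set T : Set (Euc n) := (closure S)ᶜ with hT
  have hTopen : IsOpen T := isClosed_closure.isOpen_compl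
  have hcover : ({(0 : Euc n)}ᶜ : Set (Euc n)) ⊆ S ∪ T := by
    intro z hz
    by_cases hzc : z ∈ closure S
    · exact Or.inl (hclos z hzc hz)
    · exact Or.inr hzc
  have hSne : (({(0 : Euc n)}ᶜ : Set (Euc n)) ∩ S).Nonempty := by
    set u : Euc n := EuclideanSpace.single 0 1 with hu
    have hu0 : u ≠ 0 := by
      intro h
      have : ‖u‖ = 1 := by rw [hu]; simp
      rw [h] at this; simp at this
    refine ⟨Psi F u, ?_, ⟨u, hu0, rfl⟩⟩
    exact psi_ne_zero hsm hhom hpos hu0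
  have hTne : (({(0 : Euc n)}ᶜ : Set (Euc n)) ∩ T).Nonempty := by
    refine ⟨x, hx, ?_⟩
    intro hxc
    exact hxS (hclos x hxc hx)
  obtain ⟨z, hz1, hz2, hz3⟩ := hconn S T hSopen hTopen hcover hSne hTne
  exact hz3 (subset_closure hz2)
end surj

end MinkAux

theorem statement_3 {n : ℕ} (hn : 1 ≤ n) (F : Euc n → ℝ)
    (hF : MinkowskiIntegrand n F) (hFell : Elliptic n F)
    (hconv : ConvexOn ℝ Set.univ F) :
    (∀ x : Euc n, x ≠ 0 → DifferentiableAt ℝ (dualF n F) x) ∧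
    (∀ x : Euc n, x ≠ 0 →
      dualF n F x • gradient F (gradient (dualF n F) x) = x) ∧
    (∀ ξ : Euc n, ‖ξ‖ = 1 →
      F ξ • gradient (dualF n F) (gradient F ξ) = ξ) := by
  obtain ⟨hF0, hsm, hhom, hpos⟩ := hF
  have hmain : ∀ x : Euc n, x ≠ 0 → DifferentiableAt ℝ (dualF n F) x := by
    intro x hx
    obtain ⟨ξ, hξ0, hΨ⟩ := MinkAux.psi_surj hsm hhom hpos hn hFell hx
    rw [← hΨ]
    exact (MinkAux.local_pkg hsm hhom hpos hFell hconv hξ0).1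
  refine ⟨hmain, ?_, ?_⟩
  · intro x hx
    obtain ⟨ξ, hξ0, hΨ⟩ := MinkAux.psi_surj hsm hhom hpos hn hFell hx
    have hFξ : 0 < F ξ := hpos ξ hξ0
    have h1 : dualF n F x = F ξ := by
      rw [← hΨ]; exact MinkAux.dual_psi hsm hhom hpos hconv hξ0
    have h2 : gradient (dualF n F) x = (F ξ)⁻¹ • ξ := by
      rw [← hΨ]; exact (MinkAux.local_pkg hsm hhom hpos hFell hconv hξ0).2
    have h3 : gradient F ((F ξ)⁻¹ • ξ) = gradient F ξ :=
      MinkAux.grad_smul_eq hsm hhom (inv_pos.mpr hFξ) hξ0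
    rw [h1, h2, h3, ← hΨ]
    rfl
  · intro ξ hξ1
    have hξ0 : ξ ≠ 0 := MinkAux.unit_ne_zero hξ1
    have hFξ : 0 < F ξ := hpos ξ hξ0
    set η : Euc n := (F ξ)⁻¹ • ξ with hη
    have hη0 : η ≠ 0 := smul_ne_zero (inv_ne_zero (ne_of_gt hFξ)) hξ0
    have hgrad_eq : gradient F ξ = MinkAux.Psi F η := by
      rw [hη, MinkAux.psi_hom hsm hhom (inv_pos.mpr hFξ) hξ0]
      show gradient F ξ = (F ξ)⁻¹ • (F ξ • gradient F ξ)
      rw [smul_smul, inv_mul_cancel₀ (ne_of_gt hFξ), one_smul]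
    have hFη : F η = 1 := by
      rw [hη, hhom _ (inv_pos.mpr hFξ) ξ, inv_mul_cancel₀ (ne_of_gt hFξ)]
    have h2 : gradient (dualF n F) (gradient F ξ) = (F η)⁻¹ • η := by
      rw [hgrad_eq]; exact (MinkAux.local_pkg hsm hhom hpos hFell hconv hη0).2
    rw [h2, hFη, hη, inv_one, one_smul, smul_smul, mul_inv_cancel₀ (ne_of_gt hFξ), one_smul]
end
end

section
/- Let F̃ be an elliptic Minkowski integrand. Then the Cahn–Hoffman map Φ = ∇F̃ is injective on the unit sphere: if ξ₁ and ξ₂ are unit vectors in ℝ^{n+1} with ∇F̃(ξ₁) = ∇F̃(ξ₂), then ξ₁ = ξ₂. -/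
open RealInnerProductSpace

noncomputable section

namespace Statement6Aux

variable {n : ℕ} {F : Euc n → ℝ}

lemma grad_inner (F : Euc n → ℝ) (x v : Euc n) :
    ⟪gradient F x, v⟫ = fderiv ℝ F x v := by
  rw [gradient, InnerProductSpace.toDual_symm_apply]

lemma diffAt (hF : ContDiffOn ℝ (⊤ : ℕ∞) F {0}ᶜ) {x : Euc n} (hx : x ≠ 0) :
    DifferentiableAt ℝ F x :=
  (hF.contDiffAt ((isOpen_compl_singleton).mem_nhds hx)).differentiableAt (by simp)

lemma fderiv_diffAt (hF : ContDiffOn ℝ (⊤ : ℕ∞) F {0}ᶜ) {x : Euc n} (hx : x ≠ 0) :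
    DifferentiableAt ℝ (fderiv ℝ F) x := by
  have h' : ContDiffOn ℝ (⊤ : ℕ∞) (fderiv ℝ F) {0}ᶜ :=
    hF.fderiv_of_isOpen isOpen_compl_singleton (by simp)
  exact (h'.contDiffAt ((isOpen_compl_singleton).mem_nhds hx)).differentiableAt (by simp)

lemma euler (hF : ContDiffOn ℝ (⊤ : ℕ∞) F {0}ᶜ)
    (hhom : ∀ s : ℝ, 0 < s → ∀ x : Euc n, F (s • x) = s * F x)
    {x : Euc n} (hx : x ≠ 0) : fderiv ℝ F x x = F x := by
  have hd : HasFDerivAt F (fderiv ℝ F x) x := (diffAt hF hx).hasFDerivAt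
  have hγ : HasDerivAt (fun s : ℝ => s • x) x 1 := by
    simpa using (hasDerivAt_id (1 : ℝ)).smul_const x
  have hd' : HasFDerivAt F (fderiv ℝ F x) ((1 : ℝ) • x) := by simpa using hd
  have h1 : HasDerivAt (fun s : ℝ => F (s • x)) (fderiv ℝ F x x) 1 := by
    have := hd'.comp_hasDerivAt (1 : ℝ) hγ
    exact this
  have heq : (fun s : ℝ => F (s • x)) =ᶠ[nhds (1 : ℝ)] fun s => s * F x := by
    filter_upwards [Ioi_mem_nhds (zero_lt_one)] with s hs using hhom s hs x
  have h2 : HasDerivAt (fun s : ℝ => s * F x) (fderiv ℝ F x x) 1 :=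
    h1.congr_of_eventuallyEq heq.symm
  have h3 : HasDerivAt (fun s : ℝ => s * F x) (F x) 1 := by
    simpa using (hasDerivAt_id (1 : ℝ)).mul_const (F x)
  exact h2.unique h3

end Statement6Aux

open Statement6Aux in
set_option maxHeartbeats 2000000 in
theorem statement_6 {n : ℕ} (hn : 1 ≤ n) (F : Euc n → ℝ)
    (hF : MinkowskiIntegrand n F) (hFell : Elliptic n F)
    (ξ₁ ξ₂ : Euc n) (hξ₁ : ‖ξ₁‖ = 1) (hξ₂ : ‖ξ₂‖ = 1)
    (h : gradient F ξ₁ = gradient F ξ₂) :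
    ξ₁ = ξ₂ := by
  obtain ⟨hF0, hFs, hhom, hpos⟩ := hF
  by_contra hne
  set y := gradient F ξ₁ with hy
  have hξ₁0 : ξ₁ ≠ 0 := by intro h0; rw [h0] at hξ₁; simp at hξ₁
  have hξ₂0 : ξ₂ ≠ 0 := by intro h0; rw [h0] at hξ₂; simp at hξ₂
  -- Euler identity in gradient form
  have eulerg : ∀ x : Euc n, x ≠ 0 → ⟪gradient F x, x⟫ = F x := fun x hx => by
    rw [grad_inner, euler hFs hhom hx]
  set c : ℝ := ⟪ξ₁, ξ₂⟫ with hc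
  have habs : |c| ≤ 1 := by
    have := abs_real_inner_le_norm ξ₁ ξ₂
    rw [hξ₁, hξ₂, one_mul] at this
    rw [hc]; exact this
  have hc_le : c ≤ 1 := le_of_abs_le habs
  have hc_lt : c < 1 := by
    rcases lt_or_eq_of_le hc_le with h' | h'
    · exact h'
    · exact absurd ((inner_eq_one_iff_of_norm_eq_one hξ₁ hξ₂).mp h') hne
  have hc_gt : -1 < c := by
    by_contra hle
    push_neg at hle
    have hge : -1 ≤ c := neg_le_of_abs_le habs
    have hceq : c = -1 := le_antisymm hle hge
    have : ⟪ξ₁, -ξ₂⟫ = 1 := by rw [inner_neg_right]; rw [hceq] at hc; linarith [hc.symm]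
    have hopp : ξ₁ = -ξ₂ := (inner_eq_one_iff_of_norm_eq_one hξ₁ (by simpa using hξ₂)).mp this
    -- contradiction via Euler
    have h1 : ⟪y, ξ₁⟫ = F ξ₁ := eulerg ξ₁ hξ₁0
    have h2 : ⟪y, ξ₂⟫ = F ξ₂ := by rw [h]; exact eulerg ξ₂ hξ₂0
    have : ⟪y, ξ₁⟫ = -⟪y, ξ₂⟫ := by rw [hopp, inner_neg_right]
    have p1 := hpos ξ₁ hξ₁0
    have p2 := hpos ξ₂ hξ₂0
    linarith
  -- construct orthonormal pair and angle
  set r : ℝ := Real.sqrt (1 - c ^ 2) with hr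
  have hr_pos : 0 < r := Real.sqrt_pos.mpr (by nlinarith)
  have hr_sq : r ^ 2 = 1 - c ^ 2 := Real.sq_sqrt (by nlinarith)
  set u : Euc n := ξ₂ - c • ξ₁ with hu
  set e : Euc n := r⁻¹ • u with he
  have h11 : ⟪ξ₁, ξ₁⟫ = 1 := by
    rw [real_inner_self_eq_norm_sq, hξ₁]; norm_num
  have h22 : ⟪ξ₂, ξ₂⟫ = 1 := by
    rw [real_inner_self_eq_norm_sq, hξ₂]; norm_num
  have hrne : r ≠ 0 := ne_of_gt hr_pos
  have hc' : ⟪ξ₂, ξ₁⟫ = c := by rw [hc]; exact real_inner_comm ξ₁ ξ₂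
  have hc'' : ⟪ξ₁, ξ₂⟫ = c := hc.symm
  have h1e : ⟪ξ₁, e⟫ = 0 := by
    simp only [he, hu, real_inner_smul_right, inner_sub_right, h11, hc'']
    ring
  have hee : ⟪e, e⟫ = 1 := by
    have hin : ⟪ξ₂ - c • ξ₁, ξ₂ - c • ξ₁⟫ = 1 - c ^ 2 := by
      simp only [inner_sub_left, inner_sub_right, real_inner_smul_left,
        real_inner_smul_right, h11, h22, hc', hc'']
      ring
    rw [he, real_inner_smul_left, real_inner_smul_right, hu, hin, ← hr_sq, pow_two]
    field_simp
  have he1 : ⟪e, ξ₁⟫ = 0 := by rw [real_inner_comm]; exact h1e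
  set θ : ℝ := Real.arccos c with hθ
  have hθ_pos : 0 < θ := Real.arccos_pos.mpr hc_lt
  have hcosθ : Real.cos θ = c := Real.cos_arccos (by linarith) hc_le
  have hθ_lt : θ < Real.pi := by
    rcases lt_or_eq_of_le (Real.arccos_le_pi c) with h' | h'
    · exact h'
    · exfalso; rw [hθ, h', Real.cos_pi] at hcosθ; linarith
  have hsinθ : Real.sin θ = r := by rw [hθ, Real.sin_arccos, hr]
  have hξ₂eq : ξ₂ = Real.cos θ • ξ₁ + Real.sin θ • e := by
    rw [hcosθ, hsinθ, he, smul_smul, mul_inv_cancel₀ (ne_of_gt hr_pos), one_smul, hu]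
    abel
  -- the curve
  set γ : ℝ → Euc n := fun t => Real.cos t • ξ₁ + Real.sin t • e with hγ
  set γ' : ℝ → Euc n := fun t => (-Real.sin t) • ξ₁ + Real.cos t • e with hγ'
  have hip : ∀ a b a' b' : ℝ, ⟪a • ξ₁ + b • e, a' • ξ₁ + b' • e⟫ = a * a' + b * b' := by
    intro a b a' b'
    simp only [inner_add_left, inner_add_right, real_inner_smul_left,
      real_inner_smul_right, h11, hee, h1e, he1]
    ring
  have hγsq : ∀ t, ⟪γ t, γ t⟫ = 1 := fun t => by
    rw [hγ]; simp only; rw [hip]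
    nlinarith [Real.sin_sq_add_cos_sq t]
  have hγnorm : ∀ t, ‖γ t‖ = 1 := fun t => by
    have h2 : ‖γ t‖ ^ 2 = 1 := by rw [← real_inner_self_eq_norm_sq]; exact hγsq t
    nlinarith [norm_nonneg (γ t)]
  have hγ'norm : ∀ t, ‖γ' t‖ = 1 := fun t => by
    have h1 : ⟪γ' t, γ' t⟫ = 1 := by
      rw [hγ']; simp only; rw [hip]; nlinarith [Real.sin_sq_add_cos_sq t]
    have h2 : ‖γ' t‖ ^ 2 = 1 := by rw [← real_inner_self_eq_norm_sq]; exact h1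
    nlinarith [norm_nonneg (γ' t)]
  have hγ0 : ∀ t, γ t ≠ 0 := fun t h0 => by
    have := hγnorm t; rw [h0] at this; simp at this
  have hγ'0 : ∀ t, γ' t ≠ 0 := fun t h0 => by
    have := hγ'norm t; rw [h0] at this; simp at this
  have hγγ' : ∀ t, ⟪γ t, γ' t⟫ = 0 := fun t => by
    rw [hγ, hγ']; simp only; rw [hip]; ring
  have hγd : ∀ t, HasDerivAt γ (γ' t) t := fun t => by
    exact ((Real.hasDerivAt_cos t).smul_const ξ₁).add ((Real.hasDerivAt_sin t).smul_const e)
  have hγ'd : ∀ t, HasDerivAt γ' (-(γ t)) t := fun t => by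
    have h1 : HasDerivAt (fun t => (-Real.sin t) • ξ₁) ((-Real.cos t) • ξ₁) t :=
      ((Real.hasDerivAt_sin t).neg).smul_const ξ₁
    have h2 : HasDerivAt (fun t => Real.cos t • e) ((-Real.sin t) • e) t :=
      (Real.hasDerivAt_cos t).smul_const e
    have := h1.add h2
    refine this.congr_deriv ?_
    rw [hγ]; simp only
    rw [neg_add, neg_smul, neg_smul]
  -- the function ψ and its derivatives
  set ψ : ℝ → ℝ := fun t => ⟪y, γ t⟫ - F (γ t) with hψ
  set ψ' : ℝ → ℝ := fun t => ⟪y, γ' t⟫ - fderiv ℝ F (γ t) (γ' t) with hψ'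
  have hψd : ∀ t, HasDerivAt ψ (ψ' t) t := fun t => by
    have h1 : HasDerivAt (fun t => ⟪y, γ t⟫) ⟪y, γ' t⟫ t := by
      have := (hasDerivAt_const t y).inner ℝ (hγd t)
      simpa using this
    have h2 : HasDerivAt (fun t => F (γ t)) (fderiv ℝ F (γ t) (γ' t)) t :=
      (diffAt hFs (hγ0 t)).hasFDerivAt.comp_hasDerivAt t (hγd t)
    exact h1.sub h2
  set Q : ℝ → ℝ := fun t => fderiv ℝ (fderiv ℝ F) (γ t) (γ' t) (γ' t) with hQdef
  have hψ'd : ∀ t, HasDerivAt ψ' (-ψ t - Q t) t := fun t => by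
    have h1 : HasDerivAt (fun t => ⟪y, γ' t⟫) ⟪y, -(γ t)⟫ t := by
      have := (hasDerivAt_const t y).inner ℝ (hγ'd t)
      simpa using this
    have hL : HasDerivAt (fun t => fderiv ℝ F (γ t)) (fderiv ℝ (fderiv ℝ F) (γ t) (γ' t)) t :=
      (fderiv_diffAt hFs (hγ0 t)).hasFDerivAt.comp_hasDerivAt t (hγd t)
    have h2 : HasDerivAt (fun t => fderiv ℝ F (γ t) (γ' t))
        (fderiv ℝ (fderiv ℝ F) (γ t) (γ' t) (γ' t) + fderiv ℝ F (γ t) (-(γ t))) t :=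
      hL.clm_apply (hγ'd t)
    have := h1.sub h2
    refine this.congr_deriv ?_
    have heul : fderiv ℝ F (γ t) (γ t) = F (γ t) := euler hFs hhom (hγ0 t)
    rw [hψ, hQdef]
    simp only [inner_neg_right, map_neg, heul]
    ring
  have hQpos : ∀ t, 0 < Q t := fun t => by
    have := hFell (γ t) (γ' t) (hγnorm t) (hγ'0 t) (hγγ' t)
    rwa [iteratedFDeriv_two_apply] at this
    -- note: goal closed; need to normalize ![v,v] applications
  have hψ0 : ψ 0 = 0 := by
    have hγzero : γ 0 = ξ₁ := by rw [hγ]; simp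
    rw [hψ]; simp only [hγzero]
    rw [hy, eulerg ξ₁ hξ₁0]; ring
  have hψθ : ψ θ = 0 := by
    have hγθ : γ θ = ξ₂ := by rw [hγ]; simp only; rw [← hξ₂eq]
    rw [hψ]; simp only [hγθ]
    rw [h, eulerg ξ₂ hξ₂0]; ring
  have hψ'0 : ψ' 0 = 0 := by
    have hγzero : γ 0 = ξ₁ := by rw [hγ]; simp
    rw [hψ']; simp only [hγzero]
    rw [hy, grad_inner]; ring
  have hψ'θ : ψ' θ = 0 := by
    have hγθ : γ θ = ξ₂ := by rw [hγ]; simp only; rw [← hξ₂eq]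
    rw [hψ']; simp only [hγθ]
    rw [h, grad_inner]; ring
  -- the Wronskian-type function
  set W : ℝ → ℝ := fun t => ψ' t * Real.sin t - ψ t * Real.cos t with hW
  have hWd : ∀ t, HasDerivAt W (-(Q t * Real.sin t)) t := fun t => by
    have := ((hψ'd t).mul (Real.hasDerivAt_sin t)).sub ((hψd t).mul (Real.hasDerivAt_cos t))
    refine this.congr_deriv ?_
    ring
  have hanti : StrictAntiOn W (Set.Icc 0 θ) := by
    apply strictAntiOn_of_deriv_neg (convex_Icc 0 θ)
    · exact fun x _ => (hWd x).continuousAt.continuousWithinAt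
    · intro x hx
      rw [interior_Icc] at hx
      rw [(hWd x).deriv]
      have hsin : 0 < Real.sin x :=
        Real.sin_pos_of_pos_of_lt_pi hx.1 (lt_trans hx.2 hθ_lt)
      have := hQpos x
      nlinarith
  have hW0 : W 0 = 0 := by rw [hW]; simp [hψ0, hψ'0]
  have hWθ : W θ = 0 := by rw [hW]; simp [hψθ, hψ'θ]
  have : W θ < W 0 :=
    hanti (Set.left_mem_Icc.mpr (le_of_lt hθ_pos))
      (Set.right_mem_Icc.mpr (le_of_lt hθ_pos)) hθ_pos
  rw [hW0, hWθ] at this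
  exact lt_irrefl 0 this
end
end

section
/- Let F̃ be an elliptic Minkowski integrand that is convex on ℝ^{n+1}. Then for all unit vectors ν and n in ℝ^{n+1}: −F̃(−n) ≤ ⟨∇F̃(ν), n⟩ ≤ F̃(n). Moreover, ⟨∇F̃(ν), n⟩ = F̃(n) if and only if ν = n, and ⟨∇F̃(ν), n⟩ = −F̃(−n) if and only if ν = −n. -/
open RealInnerProductSpace

noncomputable section

section AuxLemmas

variable {n : ℕ} {F : Euc n → ℝ}

lemma MI.smooth (hF : MinkowskiIntegrand n F) {x : Euc n} (hx : x ≠ 0) :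
    ContDiffAt ℝ (⊤ : ℕ∞) F x :=
  hF.2.1.contDiffAt (compl_singleton_mem_nhds hx)

lemma MI.diffAt (hF : MinkowskiIntegrand n F) {x : Euc n} (hx : x ≠ 0) :
    DifferentiableAt ℝ F x :=
  (MI.smooth hF hx).differentiableAt (by simp)

lemma MI.diffAt2 (hF : MinkowskiIntegrand n F) {x : Euc n} (hx : x ≠ 0) :
    DifferentiableAt ℝ (fderiv ℝ F) x :=
  ((MI.smooth hF hx).fderiv_right (m := (⊤ : ℕ∞)) (by simp)).differentiableAt (by simp)

lemma smul_hasFDerivAt (s : ℝ) (x : Euc n) :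
    HasFDerivAt (fun y : Euc n => s • y) (s • ContinuousLinearMap.id ℝ (Euc n)) x := by
  exact (s • ContinuousLinearMap.id ℝ (Euc n)).hasFDerivAt

lemma line_hasDerivAt (x v : Euc n) (t : ℝ) :
    HasDerivAt (fun t : ℝ => x + t • v) v t := by
  simpa using ((hasDerivAt_id t).smul_const v).const_add x

lemma fderiv_homog (hF : MinkowskiIntegrand n F) {x : Euc n} (hx : x ≠ 0) {s : ℝ}
    (hs : 0 < s) : fderiv ℝ F (s • x) = fderiv ℝ F x := by
  have hsx : s • x ≠ 0 := smul_ne_zero hs.ne' hx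
  have h1 : HasFDerivAt (fun y : Euc n => F (s • y))
      ((fderiv ℝ F (s • x)).comp (s • ContinuousLinearMap.id ℝ (Euc n))) x :=
    ((MI.diffAt hF hsx).hasFDerivAt).comp x (smul_hasFDerivAt s x)
  have h2 : HasFDerivAt (fun y : Euc n => F (s • y)) (s • fderiv ℝ F x) x := by
    have heq : (fun y : Euc n => F (s • y)) = fun y => s * F y :=
      funext fun y => hF.2.2.1 s hs y
    rw [heq]
    exact ((MI.diffAt hF hx).hasFDerivAt).const_mul s
  have h3 := h1.unique h2
  ext w
  have := congrFun (congrArg DFunLike.coe h3) w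
  simp only [ContinuousLinearMap.coe_comp', Function.comp_apply,
    ContinuousLinearMap.smul_apply, ContinuousLinearMap.coe_id', id_eq,
    map_smul, smul_eq_mul] at this
  exact mul_left_cancel₀ hs.ne' this

lemma euler (hF : MinkowskiIntegrand n F) {x : Euc n} (hx : x ≠ 0) :
    fderiv ℝ F x x = F x := by
  have hline : HasDerivAt (fun s : ℝ => s • x) x 1 := by
    simpa using (hasDerivAt_id (1 : ℝ)).smul_const x
  have h1 : HasDerivAt (fun s : ℝ => F (s • x)) (fderiv ℝ F x x) 1 := by
    have h := ((MI.diffAt hF (by simpa using hx)).hasFDerivAt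
      (x := (1 : ℝ) • x)).comp_hasDerivAt 1 hline
    simpa [Function.comp_def] using h
  have h2 : HasDerivAt (fun s : ℝ => F (s • x)) (F x) 1 := by
    have heq : (fun s : ℝ => F (s • x)) =ᶠ[nhds (1 : ℝ)] fun s => s * F x := by
      filter_upwards [eventually_gt_nhds zero_lt_one] with s hs
      exact hF.2.2.1 s hs x
    exact (hasDerivAt_mul_const (F x)).congr_of_eventuallyEq heq
  exact h1.unique h2

lemma subgrad (hF : MinkowskiIntegrand n F) (hconv : ConvexOn ℝ Set.univ F)
    {x : Euc n} (hx : x ≠ 0) (y : Euc n) :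
    F x + fderiv ℝ F x (y - x) ≤ F y := by
  set φ : ℝ → ℝ := fun t => F (x + t • (y - x)) with hφ
  have hφconv : ConvexOn ℝ Set.univ φ := by
    refine ⟨convex_univ, fun t₁ _ t₂ _ a b ha hb hab => ?_⟩
    have h : x + (a * t₁ + b * t₂) • (y - x)
        = a • (x + t₁ • (y - x)) + b • (x + t₂ • (y - x)) := by
      linear_combination (norm := module) hab • (-x)
    calc φ (a • t₁ + b • t₂) = F (a • (x + t₁ • (y - x)) + b • (x + t₂ • (y - x))) := by
          simp only [hφ, smul_eq_mul, h]
      _ ≤ a • φ t₁ + b • φ t₂ :=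
          hconv.2 (Set.mem_univ _) (Set.mem_univ _) ha hb hab
  have hderiv : HasDerivAt φ (fderiv ℝ F x (y - x)) 0 := by
    have h := ((MI.diffAt hF (by simpa using hx)).hasFDerivAt
      (x := x + (0:ℝ) • (y - x))).comp_hasDerivAt 0 (line_hasDerivAt x (y - x) 0)
    simpa [hφ, Function.comp_def] using h
  have hs := hφconv.le_slope_of_hasDerivAt (Set.mem_univ (0:ℝ)) (Set.mem_univ (1:ℝ))
    zero_lt_one hderiv
  rw [slope_def_field] at hs
  have h0 : φ 0 = F x := by simp [hφ]
  have h1 : φ 1 = F y := by simp [hφ]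
  rw [h0, h1] at hs
  linarith [hs]

lemma d2_radial (hF : MinkowskiIntegrand n F) {x : Euc n} (hx : x ≠ 0) :
    fderiv ℝ (fderiv ℝ F) x x = 0 := by
  have hline : HasDerivAt (fun s : ℝ => s • x) x 1 := by
    simpa using (hasDerivAt_id (1 : ℝ)).smul_const x
  have h1 : HasDerivAt (fun s : ℝ => fderiv ℝ F (s • x))
      (fderiv ℝ (fderiv ℝ F) x x) 1 := by
    have h := ((MI.diffAt2 hF (by simpa using hx)).hasFDerivAt
      (x := (1 : ℝ) • x)).comp_hasDerivAt 1 hline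
    simpa [Function.comp_def] using h
  have h2 : HasDerivAt (fun s : ℝ => fderiv ℝ F (s • x)) 0 1 := by
    have heq : (fun s : ℝ => fderiv ℝ F (s • x)) =ᶠ[nhds (1 : ℝ)]
        fun _ => fderiv ℝ F x := by
      filter_upwards [eventually_gt_nhds zero_lt_one] with s hs
      exact fderiv_homog hF hx hs
    exact (hasDerivAt_const 1 (fderiv ℝ F x)).congr_of_eventuallyEq heq
  exact h1.unique h2

lemma d2_homog (hF : MinkowskiIntegrand n F) {x : Euc n} (hx : x ≠ 0) {s : ℝ}
    (hs : 0 < s) (v w : Euc n) :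
    fderiv ℝ (fderiv ℝ F) x v w = s * fderiv ℝ (fderiv ℝ F) (s • x) v w := by
  have hsx : s • x ≠ 0 := smul_ne_zero hs.ne' hx
  have h1 : HasFDerivAt (fun y : Euc n => fderiv ℝ F (s • y))
      ((fderiv ℝ (fderiv ℝ F) (s • x)).comp (s • ContinuousLinearMap.id ℝ (Euc n))) x :=
    ((MI.diffAt2 hF hsx).hasFDerivAt).comp x (smul_hasFDerivAt s x)
  have h2 : HasFDerivAt (fun y : Euc n => fderiv ℝ F (s • y))
      (fderiv ℝ (fderiv ℝ F) x) x := by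
    have heq : (fun y : Euc n => fderiv ℝ F (s • y)) =ᶠ[nhds x] fderiv ℝ F := by
      filter_upwards [compl_singleton_mem_nhds hx] with y hy
      exact fderiv_homog hF hy hs
    exact ((MI.diffAt2 hF hx).hasFDerivAt).congr_of_eventuallyEq heq
  have h3 := h2.unique h1
  have := congrFun (congrArg DFunLike.coe h3) v
  rw [this]
  simp

lemma d2_symm (hF : MinkowskiIntegrand n F) {x : Euc n} (hx : x ≠ 0) (v w : Euc n) :
    fderiv ℝ (fderiv ℝ F) x v w = fderiv ℝ (fderiv ℝ F) x w v := by
  have hev : ∀ᶠ y in nhds x, HasFDerivAt F (fderiv ℝ F y) y := by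
    filter_upwards [compl_singleton_mem_nhds hx] with y hy
    exact (MI.diffAt hF hy).hasFDerivAt
  exact second_derivative_symmetric_of_eventually hev (MI.diffAt2 hF hx).hasFDerivAt v w

lemma d2_zero_of_affine (hF : MinkowskiIntegrand n F) {ν v : Euc n} {t₀ c₀ c₁ : ℝ}
    (hx₀ : ν + t₀ • v ≠ 0)
    (haff : ∀ᶠ t in nhds t₀, F (ν + t • v) = c₀ + t * c₁) :
    fderiv ℝ (fderiv ℝ F) (ν + t₀ • v) v v = 0 := by
  set x₀ := ν + t₀ • v with hx₀def
  have hLcont : Continuous (fun t : ℝ => ν + t • v) :=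
    continuous_const.add (continuous_id.smul continuous_const)
  have hne : ∀ᶠ t in nhds t₀, ν + t • v ≠ 0 := by
    have : {0}ᶜ ∈ nhds x₀ := compl_singleton_mem_nhds hx₀
    exact hLcont.continuousAt.preimage_mem_nhds this
  obtain ⟨s, hs_sub, hs_open, hts⟩ := mem_nhds_iff.mp (Filter.inter_mem haff hne :
    {t : ℝ | F (ν + t • v) = c₀ + t * c₁ ∧ ν + t • v ≠ 0} ∈ nhds t₀)
  set w : ℝ → ℝ := fun t => fderiv ℝ F (ν + t • v) v with hw
  have hwconst : ∀ t ∈ s, w t = c₁ := by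
    intro t hts'
    have htne : ν + t • v ≠ 0 := (hs_sub hts').2
    have hu1 : HasDerivAt (fun t : ℝ => F (ν + t • v)) (w t) t := by
      have h := ((MI.diffAt hF htne).hasFDerivAt).comp_hasDerivAt t (line_hasDerivAt ν v t)
      simpa [hw, Function.comp_def] using h
    have hu2 : HasDerivAt (fun t : ℝ => F (ν + t • v)) c₁ t := by
      have heq : (fun t : ℝ => F (ν + t • v)) =ᶠ[nhds t] fun t => c₀ + t * c₁ := by
        filter_upwards [hs_open.mem_nhds hts'] with r hr
        exact (hs_sub hr).1
      exact (((hasDerivAt_mul_const c₁).const_add c₀)).congr_of_eventuallyEq heq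
    exact hu1.unique hu2
  have hW1 : HasDerivAt w (fderiv ℝ (fderiv ℝ F) x₀ v v) t₀ := by
    have houter : HasFDerivAt (fun y : Euc n => fderiv ℝ F y v)
        ((ContinuousLinearMap.apply ℝ ℝ v).comp (fderiv ℝ (fderiv ℝ F) x₀)) x₀ :=
      ((ContinuousLinearMap.apply ℝ ℝ v).hasFDerivAt).comp x₀ (MI.diffAt2 hF hx₀).hasFDerivAt
    have h := houter.comp_hasDerivAt t₀ (line_hasDerivAt ν v t₀)
    simpa [hw, Function.comp_def] using h
  have hW2 : HasDerivAt w 0 t₀ := by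
    have heq : w =ᶠ[nhds t₀] fun _ => c₁ := by
      filter_upwards [hs_open.mem_nhds hts] with r hr
      exact hwconst r hr
    exact (hasDerivAt_const t₀ c₁).congr_of_eventuallyEq heq
  exact hW1.unique hW2

lemma key (hF : MinkowskiIntegrand n F) (hFell : Elliptic n F)
    (hconv : ConvexOn ℝ Set.univ F) {ν nn : Euc n} (hν : ‖ν‖ = 1) (hnn : ‖nn‖ = 1)
    (heq : fderiv ℝ F ν nn = F nn) : ν = nn := by
  by_contra hne
  have hν0 : ν ≠ 0 := fun h => by simp [h] at hν
  have hnn0 : nn ≠ 0 := fun h => by simp [h] at hnn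
  have heuler : fderiv ℝ F ν ν = F ν := euler hF hν0
  have hFν : 0 < F ν := hF.2.2.2 ν hν0
  have hFnn : 0 < F nn := hF.2.2.2 nn hnn0
  have hsum : ν + nn ≠ 0 := by
    intro h
    have hnnν : nn = -ν := by
      have := congrArg (fun z => z - ν) h
      simpa [add_sub_cancel_left, neg_eq_iff_add_eq_zero] using by linear_combination (norm := module) h
    rw [hnnν] at heq
    have : fderiv ℝ F ν (-ν) = -F ν := by rw [map_neg, heuler]
    rw [this] at heq
    have : 0 < F (-ν) := hF.2.2.2 (-ν) (by simpa using hν0)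
    linarith
  set v : Euc n := nn - ν with hv
  set c₁ : ℝ := F nn - F ν with hc₁
  have hlin : fderiv ℝ F ν v = c₁ := by rw [hv, map_sub, heq, heuler, hc₁]
  have haff : ∀ᶠ t in nhds ((2:ℝ)⁻¹), F (ν + t • v) = F ν + t * c₁ := by
    filter_upwards [Ioo_mem_nhds (by norm_num : (0:ℝ) < 2⁻¹) (by norm_num : (2:ℝ)⁻¹ < 1)]
      with t ht
    have hupper : F (ν + t • v) ≤ F ν + t * c₁ := by
      have hco := hconv.2 (Set.mem_univ ν) (Set.mem_univ nn)
        (by linarith [ht.2] : (0:ℝ) ≤ 1 - t) ht.1.le (by ring)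
      have harg : (1 - t) • ν + t • nn = ν + t • v := by
        rw [hv]; module
      rw [harg] at hco
      simp only [smul_eq_mul] at hco
      rw [hc₁]; linarith
    have hlower : F ν + t * c₁ ≤ F (ν + t • v) := by
      have hsg := subgrad hF hconv hν0 (ν + t • v)
      have harg : ν + t • v - ν = t • v := by abel
      rw [harg, map_smul, hlin, smul_eq_mul] at hsg
      linarith
    linarith
  have hx₀ : ν + (2:ℝ)⁻¹ • v ≠ 0 := by
    intro h
    apply hsum
    have : ν + (2:ℝ)⁻¹ • v = (2:ℝ)⁻¹ • (ν + nn) := by rw [hv]; module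
    rw [this] at h
    simpa using (smul_eq_zero.mp h).resolve_left (by norm_num)
  set x₀ : Euc n := ν + (2:ℝ)⁻¹ • v with hx₀def
  have hB0 : fderiv ℝ (fderiv ℝ F) x₀ v v = 0 := d2_zero_of_affine hF hx₀ haff
  set r : ℝ := ‖x₀‖ with hr
  have hrpos : 0 < r := norm_pos_iff.mpr hx₀
  set xh : Euc n := r⁻¹ • x₀ with hxh
  have hxh1 : ‖xh‖ = 1 := by
    rw [hxh, norm_smul, norm_inv, norm_norm, ← hr, inv_mul_cancel₀ hrpos.ne']
  have hxh0 : xh ≠ 0 := fun h => by simp [h] at hxh1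
  have hBxh : fderiv ℝ (fderiv ℝ F) xh v v = 0 := by
    have := d2_homog hF hx₀ (inv_pos.mpr hrpos) v v
    rw [← hxh] at this
    rw [hB0] at this
    field_simp at this
    simpa using this.symm
  set a : ℝ := ⟪xh, v⟫ with ha
  set vp : Euc n := v - a • xh with hvp
  have hinner : ⟪xh, vp⟫ = 0 := by
    rw [hvp, inner_sub_right, real_inner_smul_right, real_inner_self_eq_norm_sq, hxh1, ← ha]
    ring
  have hvp0 : vp ≠ 0 := by
    intro h
    have hveq : v = (a * r⁻¹) • x₀ := by
      have : v = a • xh := by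
        have := congrArg (fun z => z + a • xh) h
        simpa using by linear_combination (norm := module) h
      rw [this, hxh, smul_smul]
    set κ : ℝ := a * r⁻¹ with hκ
    have hvec : (1 - κ / 2) • nn = (1 + κ / 2) • ν := by
      rw [hx₀def, hv] at hveq
      linear_combination (norm := module) hveq
    have hnorm : |1 - κ / 2| = |1 + κ / 2| := by
      have := congrArg norm hvec
      rwa [norm_smul, norm_smul, hν, hnn, mul_one, mul_one, Real.norm_eq_abs,
        Real.norm_eq_abs] at this
    have hκ0 : κ = 0 := by
      have := congrArg (fun z => z ^ 2) hnorm
      simp only [sq_abs] at this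
      nlinarith
    rw [hκ0] at hvec
    apply hne
    simpa using hvec.symm
  have hBrad : fderiv ℝ (fderiv ℝ F) xh xh = 0 := d2_radial hF hxh0
  have hdecomp : v = vp + a • xh := by rw [hvp]; abel
  have e2 : fderiv ℝ (fderiv ℝ F) xh vp xh = 0 := by
    rw [d2_symm hF hxh0 vp xh, hBrad]
    simp
  have hexp : fderiv ℝ (fderiv ℝ F) xh v v
      = fderiv ℝ (fderiv ℝ F) xh vp vp + a * fderiv ℝ (fderiv ℝ F) xh vp xh := by
    rw [hdecomp]
    simp only [map_add, map_smul, ContinuousLinearMap.add_apply,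
      ContinuousLinearMap.smul_apply, hBrad, ContinuousLinearMap.zero_apply,
      smul_eq_mul, smul_zero, mul_zero]
    ring
  have hBvp : fderiv ℝ (fderiv ℝ F) xh vp vp = 0 := by
    rw [hBxh, e2, mul_zero, add_zero] at hexp
    exact hexp.symm
  have hell := hFell xh vp hxh1 hvp0 hinner
  rw [iteratedFDeriv_two_apply] at hell
  simp only [Matrix.cons_val_zero, Matrix.cons_val_one, Matrix.head_cons] at hell
  rw [hBvp] at hell
  exact lt_irrefl 0 hell

end AuxLemmas

theorem statement_7 {n : ℕ} (hn : 1 ≤ n) (F : Euc n → ℝ)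
    (hF : MinkowskiIntegrand n F) (hFell : Elliptic n F)
    (hconv : ConvexOn ℝ Set.univ F)
    (ν nn : Euc n) (hν : ‖ν‖ = 1) (hnn : ‖nn‖ = 1) :
    (-F (-nn) ≤ ⟪gradient F ν, nn⟫ ∧ ⟪gradient F ν, nn⟫ ≤ F nn) ∧
    (⟪gradient F ν, nn⟫ = F nn ↔ ν = nn) ∧
    (⟪gradient F ν, nn⟫ = -F (-nn) ↔ ν = -nn) := by
  have hν0 : ν ≠ 0 := fun h => by simp [h] at hν
  have hnn0 : nn ≠ 0 := fun h => by simp [h] at hnn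
  have hgrad : ∀ y : Euc n, ⟪gradient F ν, y⟫ = fderiv ℝ F ν y := fun y => by
    rw [gradient]
    exact InnerProductSpace.toDual_symm_apply
  have heuler : fderiv ℝ F ν ν = F ν := euler hF hν0
  have hupper : fderiv ℝ F ν nn ≤ F nn := by
    have := subgrad hF hconv hν0 nn
    rw [map_sub, heuler] at this
    linarith
  have hlower : -F (-nn) ≤ fderiv ℝ F ν nn := by
    have := subgrad hF hconv hν0 (-nn)
    have harg : fderiv ℝ F ν (-nn - ν) = -fderiv ℝ F ν nn - F ν := by
      rw [map_sub, map_neg, heuler]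
    rw [harg] at this
    linarith
  refine ⟨⟨by rw [hgrad]; exact hlower, by rw [hgrad]; exact hupper⟩, ?_, ?_⟩
  · rw [hgrad]
    constructor
    · exact fun h => key hF hFell hconv hν hnn h
    · rintro rfl
      exact heuler
  · rw [hgrad]
    have hnn' : ‖(-nn : Euc n)‖ = 1 := by rwa [norm_neg]
    constructor
    · intro h
      have h' : fderiv ℝ F ν (-nn) = F (-nn) := by
        rw [map_neg, h]; ring
      exact key hF hFell hconv hν hnn' h'
    · intro h
      have h' : fderiv ℝ F ν (-nn) = F (-nn) := by
        rw [h]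
        exact euler hF (by simpa using hnn0)
      rw [map_neg] at h'
      linarith
end
end

section
/- Let F̃ be an elliptic Minkowski integrand. Let ν, n₁, n₂ be linearly independent unit vectors in ℝ^{n+1} with ⟨∇F̃(ν), n₁⟩ = ⟨∇F̃(ν), n₂⟩ = 0. Let w be a unit vector with w = a·ν + b₁·n₁ + b₂·n₂ for some real numbers a ≥ 0, b₁ ≥ 0, b₂ ≥ 0 (i.e., w lies in the geodesic triangle with vertices ν, n₁, n₂). If ⟨∇F̃(w), n₁⟩ = ⟨∇F̃(w), n₂⟩ = 0, then w = ν. -/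
open RealInnerProductSpace

noncomputable section

section aux
variable {n : ℕ} {F : Euc n → ℝ}

lemma aux_contDiffAt (hd : ContDiffOn ℝ (⊤ : ℕ∞) F ({0}ᶜ : Set (Euc n))) {p : Euc n} (hp : p ≠ 0) :
    ContDiffAt ℝ (⊤ : ℕ∞) F p :=
  hd.contDiffAt (isOpen_compl_singleton.mem_nhds hp)

lemma aux_hasFDerivAt (hd : ContDiffOn ℝ (⊤ : ℕ∞) F ({0}ᶜ : Set (Euc n))) {p : Euc n} (hp : p ≠ 0) :
    HasFDerivAt F (fderiv ℝ F p) p :=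
  ((aux_contDiffAt hd hp).differentiableAt (by simp)).hasFDerivAt

lemma aux_hasFDerivAt_fderiv (hd : ContDiffOn ℝ (⊤ : ℕ∞) F ({0}ᶜ : Set (Euc n))) {p : Euc n} (hp : p ≠ 0) :
    HasFDerivAt (fderiv ℝ F) (fderiv ℝ (fderiv ℝ F) p) p :=
  (((aux_contDiffAt hd hp).fderiv_right (WithTop.coe_le_coe.mpr le_top)).differentiableAt
    (one_ne_zero : (1 : WithTop ℕ∞) ≠ 0)).hasFDerivAt

end aux
section aux2
variable {n : ℕ} {F : Euc n → ℝ}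

lemma aux_euler (hd : ContDiffOn ℝ (⊤ : ℕ∞) F ({0}ᶜ : Set (Euc n)))
    (hhom : ∀ s : ℝ, 0 < s → ∀ x : Euc n, F (s • x) = s * F x)
    {p : Euc n} (hp : p ≠ 0) : fderiv ℝ F p p = F p := by
  have hline : HasDerivAt (fun s : ℝ => s • p) p 1 := by
    simpa using (hasDerivAt_id (1 : ℝ)).smul_const p
  have hFp : HasFDerivAt F (fderiv ℝ F p) ((fun s : ℝ => s • p) 1) := by
    simpa using aux_hasFDerivAt hd hp
  have h1 : HasDerivAt (fun s : ℝ => F (s • p)) (fderiv ℝ F p p) 1 :=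
    hFp.comp_hasDerivAt 1 hline
  have h2 : (fun s : ℝ => s * F p) =ᶠ[nhds (1 : ℝ)] fun s : ℝ => F (s • p) := by
    filter_upwards [eventually_gt_nhds zero_lt_one] with s hs
    exact (hhom s hs p).symm
  have h3 : HasDerivAt (fun s : ℝ => s * F p) (F p) 1 := by
    simpa using (hasDerivAt_id (1 : ℝ)).mul_const (F p)
  exact (h1.congr_of_eventuallyEq h2).unique h3

lemma aux_fderiv_homog (hd : ContDiffOn ℝ (⊤ : ℕ∞) F ({0}ᶜ : Set (Euc n)))
    (hhom : ∀ s : ℝ, 0 < s → ∀ x : Euc n, F (s • x) = s * F x)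
    {s : ℝ} (hs : 0 < s) {p : Euc n} (hp : p ≠ 0) :
    fderiv ℝ F (s • p) = fderiv ℝ F p := by
  have hsp : s • p ≠ 0 := smul_ne_zero hs.ne' hp
  have hmap : HasFDerivAt (fun y : Euc n => s • y)
      (s • ContinuousLinearMap.id ℝ (Euc n)) p := (hasFDerivAt_id p).const_smul s
  have h1 : HasFDerivAt (fun y : Euc n => F (s • y))
      ((fderiv ℝ F (s • p)).comp (s • ContinuousLinearMap.id ℝ (Euc n))) p :=
    (aux_hasFDerivAt hd hsp).comp p hmap
  have h2 : HasFDerivAt (fun y : Euc n => s * F y) (s • fderiv ℝ F p) p :=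
    (aux_hasFDerivAt hd hp).const_mul s
  have heq : (fun y : Euc n => s * F y) =ᶠ[nhds p] fun y : Euc n => F (s • y) := by
    filter_upwards [isOpen_compl_singleton.mem_nhds hp] with y hy
    exact (hhom s hs y).symm
  have h1' : HasFDerivAt (fun y : Euc n => s * F y)
      ((fderiv ℝ F (s • p)).comp (s • ContinuousLinearMap.id ℝ (Euc n))) p :=
    h1.congr_of_eventuallyEq heq
  have hE := h1'.unique h2
  ext v
  have hv := congrArg (fun L : Euc n →L[ℝ] ℝ => L v) hE
  simp only [ContinuousLinearMap.coe_comp', Function.comp_apply,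
    ContinuousLinearMap.smul_apply, ContinuousLinearMap.coe_id', id_eq,
    ContinuousLinearMap.map_smul] at hv
  have : s * fderiv ℝ F (s • p) v = s * fderiv ℝ F p v := by
    simpa [smul_eq_mul] using hv
  exact mul_left_cancel₀ hs.ne' this

lemma aux_B_self (hd : ContDiffOn ℝ (⊤ : ℕ∞) F ({0}ᶜ : Set (Euc n)))
    (hhom : ∀ s : ℝ, 0 < s → ∀ x : Euc n, F (s • x) = s * F x)
    {p : Euc n} (hp : p ≠ 0) : fderiv ℝ (fderiv ℝ F) p p = 0 := by
  have hline : HasDerivAt (fun s : ℝ => s • p) p 1 := by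
    simpa using (hasDerivAt_id (1 : ℝ)).smul_const p
  have hGp : HasFDerivAt (fderiv ℝ F) (fderiv ℝ (fderiv ℝ F) p) ((fun s : ℝ => s • p) 1) := by
    simpa using aux_hasFDerivAt_fderiv hd hp
  have h1 : HasDerivAt (fun s : ℝ => fderiv ℝ F (s • p)) (fderiv ℝ (fderiv ℝ F) p p) 1 :=
    hGp.comp_hasDerivAt 1 hline
  have h2 : (fun _ : ℝ => fderiv ℝ F p) =ᶠ[nhds (1 : ℝ)] fun s : ℝ => fderiv ℝ F (s • p) := by
    filter_upwards [eventually_gt_nhds zero_lt_one] with s hs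
    exact (aux_fderiv_homog hd hhom hs hp).symm
  have h3 : HasDerivAt (fun _ : ℝ => fderiv ℝ F p) (0 : Euc n →L[ℝ] ℝ) 1 :=
    hasDerivAt_const _ _
  exact (h1.congr_of_eventuallyEq h2).unique h3

lemma aux_B_homog (hd : ContDiffOn ℝ (⊤ : ℕ∞) F ({0}ᶜ : Set (Euc n)))
    (hhom : ∀ s : ℝ, 0 < s → ∀ x : Euc n, F (s • x) = s * F x)
    {s : ℝ} (hs : 0 < s) {p : Euc n} (hp : p ≠ 0) (v : Euc n) :
    s * fderiv ℝ (fderiv ℝ F) (s • p) v v = fderiv ℝ (fderiv ℝ F) p v v := by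
  have hsp : s • p ≠ 0 := smul_ne_zero hs.ne' hp
  have hmap : HasFDerivAt (fun y : Euc n => s • y)
      (s • ContinuousLinearMap.id ℝ (Euc n)) p := (hasFDerivAt_id p).const_smul s
  have h1 : HasFDerivAt (fun y : Euc n => fderiv ℝ F (s • y))
      ((fderiv ℝ (fderiv ℝ F) (s • p)).comp (s • ContinuousLinearMap.id ℝ (Euc n))) p :=
    (aux_hasFDerivAt_fderiv hd hsp).comp p hmap
  have heq : (fderiv ℝ F : Euc n → Euc n →L[ℝ] ℝ) =ᶠ[nhds p]
      fun y : Euc n => fderiv ℝ F (s • y) := by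
    filter_upwards [isOpen_compl_singleton.mem_nhds hp] with y hy
    exact (aux_fderiv_homog hd hhom hs hy).symm
  have h1' : HasFDerivAt (fderiv ℝ F)
      ((fderiv ℝ (fderiv ℝ F) (s • p)).comp (s • ContinuousLinearMap.id ℝ (Euc n))) p :=
    h1.congr_of_eventuallyEq heq
  have hE := h1'.unique (aux_hasFDerivAt_fderiv hd hp)
  have hv := congrArg (fun L : Euc n →L[ℝ] Euc n →L[ℝ] ℝ => L v v) hE
  simp only [ContinuousLinearMap.coe_comp', Function.comp_apply,
    ContinuousLinearMap.smul_apply, ContinuousLinearMap.coe_id', id_eq,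
    ContinuousLinearMap.map_smul] at hv
  simpa [smul_eq_mul] using hv

lemma aux_symm (hd : ContDiffOn ℝ (⊤ : ℕ∞) F ({0}ᶜ : Set (Euc n))) {p : Euc n} (hp : p ≠ 0)
    (a b : Euc n) :
    fderiv ℝ (fderiv ℝ F) p a b = fderiv ℝ (fderiv ℝ F) p b a :=
  (aux_contDiffAt hd hp).isSymmSndFDerivAt
    (by rw [minSmoothness_of_isRCLikeNormedField]; exact WithTop.coe_le_coe.mpr le_top) a b

end aux2
section aux3
variable {n : ℕ} {F : Euc n → ℝ}

lemma aux_pos (hd : ContDiffOn ℝ (⊤ : ℕ∞) F ({0}ᶜ : Set (Euc n)))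
    (hhom : ∀ s : ℝ, 0 < s → ∀ x : Euc n, F (s • x) = s * F x)
    (hell : ∀ x v : Euc n, ‖x‖ = 1 → v ≠ 0 → ⟪x, v⟫ = 0 →
      0 < iteratedFDeriv ℝ 2 F x ![v, v])
    {p v : Euc n} (hp : p ≠ 0) (hv : ∀ c : ℝ, v ≠ c • p) :
    0 < fderiv ℝ (fderiv ℝ F) p v v := by
  set r : ℝ := ‖p‖ with hr_def
  have hr : 0 < r := norm_pos_iff.mpr hp
  set u : Euc n := r⁻¹ • p with hu_def
  have hu : ‖u‖ = 1 := by
    rw [hu_def, norm_smul, norm_inv, norm_norm, inv_mul_cancel₀ hr.ne']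
  have hu0 : u ≠ 0 := by
    intro h; rw [h, norm_zero] at hu; exact one_ne_zero hu.symm
  have hpu : p = r • u := (smul_inv_smul₀ hr.ne' p).symm
  set α : ℝ := ⟪u, v⟫ with hα_def
  set z : Euc n := v - α • u with hz_def
  have hz_orth : ⟪u, z⟫ = 0 := by
    rw [hz_def, inner_sub_right, real_inner_smul_right, real_inner_self_eq_norm_sq, hu]
    ring
  have hz0 : z ≠ 0 := by
    intro h
    have hv' : v = (α * r⁻¹) • p := by
      have : v = α • u := by rwa [hz_def, sub_eq_zero] at h
      rw [this, hu_def, smul_smul]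
    exact hv (α * r⁻¹) hv'
  have hBzz : 0 < fderiv ℝ (fderiv ℝ F) u z z := by
    have := hell u z hu hz0 hz_orth
    rwa [iteratedFDeriv_two_apply, Matrix.cons_val_zero, Matrix.cons_val_one,
      Matrix.cons_val_zero] at this
  have hBuu : fderiv ℝ (fderiv ℝ F) u u = 0 := aux_B_self hd hhom hu0
  have hvz : v = α • u + z := by rw [hz_def]; abel
  have e1 : fderiv ℝ (fderiv ℝ F) u v = fderiv ℝ (fderiv ℝ F) u z := by
    rw [hvz, map_add, map_smul, hBuu, smul_zero, zero_add]
  have hzu : fderiv ℝ (fderiv ℝ F) u z u = 0 := by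
    rw [aux_symm hd hu0 z u, hBuu]; rfl
  have hBuz : fderiv ℝ (fderiv ℝ F) u v v = fderiv ℝ (fderiv ℝ F) u z z := by
    rw [e1]
    conv_lhs => rw [hvz]
    rw [map_add, map_smul, hzu, smul_zero, zero_add]
  have hhomB := aux_B_homog hd hhom hr hu0 v
  rw [← hpu] at hhomB
  have hfin : fderiv ℝ (fderiv ℝ F) p v v = r⁻¹ * fderiv ℝ (fderiv ℝ F) u v v := by
    field_simp [← hhomB]
    rw [← hhomB]; ring
  rw [hfin, hBuz]
  positivity

lemma aux_key (hd : ContDiffOn ℝ (⊤ : ℕ∞) F ({0}ᶜ : Set (Euc n)))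
    (hhom : ∀ s : ℝ, 0 < s → ∀ x : Euc n, F (s • x) = s * F x)
    (hell : ∀ x v : Euc n, ‖x‖ = 1 → v ≠ 0 → ⟪x, v⟫ = 0 →
      0 < iteratedFDeriv ℝ 2 F x ![v, v])
    {x y : Euc n} (hx : x ≠ 0) (hxy : ∀ c : ℝ, y ≠ c • x) :
    fderiv ℝ F x y < F y := by
  set v : Euc n := y - x with hv_def
  have hne : ∀ t : ℝ, x + t • v ≠ 0 := by
    intro t h
    rcases eq_or_ne t 0 with rfl | ht
    · simp at h; exact hx h
    · have hv1 : v = (-t⁻¹) • x := by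
        have ht' : t • v = -x := by linear_combination (norm := module) h
        calc v = t⁻¹ • (t • v) := by rw [inv_smul_smul₀ ht]
        _ = (-t⁻¹) • x := by rw [ht']; module
      exact hxy (1 - t⁻¹) (by rw [← sub_add_cancel y x, ← hv_def, hv1]; module)
  have hind : ∀ t c : ℝ, v ≠ c • (x + t • v) := by
    intro t c h
    have h' : (1 - c * t) • v = c • x := by linear_combination (norm := module) h
    rcases eq_or_ne c 0 with rfl | hc
    · have hvv : v = 0 := by simpa using h'
      exact hxy 1 (by rw [← sub_add_cancel y x, ← hv_def, hvv]; simp)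
    · rcases eq_or_ne (1 - c * t) 0 with h0 | h0
      · rw [h0, zero_smul] at h'
        rcases smul_eq_zero.mp h'.symm with h1 | h1
        · exact hc h1
        · exact hx h1
      · have hv1 : v = ((1 - c * t)⁻¹ * c) • x := by
          calc v = (1 - c * t)⁻¹ • ((1 - c * t) • v) := by rw [inv_smul_smul₀ h0]
          _ = ((1 - c * t)⁻¹ * c) • x := by rw [h', smul_smul]
        exact hxy (1 + (1 - c * t)⁻¹ * c)
          (by rw [← sub_add_cancel y x, ← hv_def, hv1]; module)
  have hline : ∀ t : ℝ, HasDerivAt (fun t : ℝ => x + t • v) v t := fun t => by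
    simpa using ((hasDerivAt_id t).smul_const v).const_add x
  set g : ℝ → ℝ := fun t => F (x + t • v) with hg_def
  set g' : ℝ → ℝ := fun t => fderiv ℝ F (x + t • v) v with hg'_def
  have hg : ∀ t : ℝ, HasDerivAt g (g' t) t := fun t =>
    (aux_hasFDerivAt hd (hne t)).comp_hasDerivAt t (hline t)
  have hg' : ∀ t : ℝ, HasDerivAt g' (fderiv ℝ (fderiv ℝ F) (x + t • v) v v) t := by
    intro t
    have h1 : HasDerivAt (fun t : ℝ => fderiv ℝ F (x + t • v))
        (fderiv ℝ (fderiv ℝ F) (x + t • v) v) t :=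
      (aux_hasFDerivAt_fderiv hd (hne t)).comp_hasDerivAt t (hline t)
    exact (ContinuousLinearMap.apply ℝ ℝ v).hasFDerivAt.comp_hasDerivAt t h1
  have hmono : StrictMono g' :=
    strictMono_of_hasDerivAt_pos hg' fun t => aux_pos hd hhom hell (hne t) (hind t)
  obtain ⟨c, hc, hceq⟩ := exists_hasDerivAt_eq_slope g g' zero_lt_one
    (fun t _ => (hg t).continuousAt.continuousWithinAt) (fun t ht => hg t)
  have h01 : g' 0 < g' c := hmono hc.1
  have hg0 : g 0 = F x := by simp [hg_def]
  have hg1 : g 1 = F y := by simp [hg_def, hv_def]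
  have hslope : g' c = F y - F x := by rw [hceq, hg0, hg1]; ring
  have hg'0 : g' 0 = fderiv ℝ F x y - F x := by
    have h00 : g' 0 = fderiv ℝ F x v := by simp [hg'_def]
    rw [h00, hv_def, map_sub, aux_euler hd hhom hx]
  rw [hslope, hg'0] at h01
  linarith

end aux3

theorem statement_16 {n : ℕ} (hn : 2 ≤ n) (F : Euc n → ℝ)
    (hF : MinkowskiIntegrand n F) (hFell : Elliptic n F)
    (ν n₁ n₂ : Euc n) (hν : ‖ν‖ = 1) (hn₁ : ‖n₁‖ = 1) (hn₂ : ‖n₂‖ = 1)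
    (hind : LinearIndependent ℝ ![ν, n₁, n₂])
    (h₁ : ⟪gradient F ν, n₁⟫ = 0) (h₂ : ⟪gradient F ν, n₂⟫ = 0)
    (w : Euc n) (hw : ‖w‖ = 1)
    (hwab : ∃ a b₁ b₂ : ℝ, 0 ≤ a ∧ 0 ≤ b₁ ∧ 0 ≤ b₂ ∧
      w = a • ν + b₁ • n₁ + b₂ • n₂)
    (hw₁ : ⟪gradient F w, n₁⟫ = 0) (hw₂ : ⟪gradient F w, n₂⟫ = 0) :
    w = ν := by
  obtain ⟨hF0, hd, hhom, hposF⟩ := hF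
  have hell : ∀ x v : Euc n, ‖x‖ = 1 → v ≠ 0 → ⟪x, v⟫ = 0 →
      0 < iteratedFDeriv ℝ 2 F x ![v, v] := hFell
  have hν0 : ν ≠ 0 := by intro h; rw [h, norm_zero] at hν; exact one_ne_zero hν.symm
  have hw0 : w ≠ 0 := by intro h; rw [h, norm_zero] at hw; exact one_ne_zero hw.symm
  have hgrad : ∀ q v : Euc n, ⟪gradient F q, v⟫ = fderiv ℝ F q v := fun q v =>
    InnerProductSpace.toDual_symm_apply
  obtain ⟨a, b₁, b₂, ha, hb₁, hb₂, hwe⟩ := hwab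
  rw [hgrad] at h₁ h₂ hw₁ hw₂
  have hEw : fderiv ℝ F w w = F w := aux_euler hd hhom hw0
  have hexp : fderiv ℝ F w (a • ν + b₁ • n₁ + b₂ • n₂) = a * fderiv ℝ F w ν := by
    rw [map_add, map_add, map_smul, map_smul, map_smul, hw₁, hw₂]
    simp [smul_eq_mul]
  have hFw : F w = a * fderiv ℝ F w ν := by
    rw [← hexp, ← hwe]; exact hEw.symm
  have haz : 0 < a := by
    rcases ha.lt_or_eq with h | h
    · exact h
    · exfalso
      rw [← h, zero_mul] at hFw
      exact (hposF w hw0).ne' hFw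
  by_cases hcase : ∀ c : ℝ, w ≠ c • ν
  · exfalso
    have hνw : ∀ c : ℝ, ν ≠ c • w := by
      intro c hc
      have hc0 : c ≠ 0 := by
        rintro rfl; rw [zero_smul] at hc; exact hν0 hc
      exact hcase c⁻¹ (by rw [hc, smul_smul, inv_mul_cancel₀ hc0, one_smul])
    have k1 : fderiv ℝ F ν w < F w := aux_key hd hhom hell hν0 hcase
    have k2 : fderiv ℝ F w ν < F ν := aux_key hd hhom hell hw0 hνw
    have hEν : fderiv ℝ F ν ν = F ν := aux_euler hd hhom hν0
    have e1 : fderiv ℝ F ν w = a * F ν := by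
      rw [hwe, map_add, map_add, map_smul, map_smul, map_smul, h₁, h₂, hEν]
      simp [smul_eq_mul]
    rw [e1] at k1
    have k3 : F w < a * F ν := by
      rw [hFw]; exact mul_lt_mul_of_pos_left k2 haz
    linarith
  · push_neg at hcase
    obtain ⟨c, hc⟩ := hcase
    have hcomb : (c - a) • ν + (-b₁) • n₁ + (-b₂) • n₂ = 0 := by
      have h := hc.symm.trans hwe
      linear_combination (norm := module) h
    have hz := Fintype.linearIndependent_iff.mp hind ![c - a, -b₁, -b₂]
      (by simpa [Fin.sum_univ_three] using hcomb)
    have hb1 : b₁ = 0 := by have := hz 1; simpa using this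
    have hb2 : b₂ = 0 := by have := hz 2; simpa using this
    have hwa : w = a • ν := by rw [hwe, hb1, hb2]; simp
    have hnorm : |a| = 1 := by
      rw [hwa, norm_smul, hν, mul_one, Real.norm_eq_abs] at hw
      exact hw
    have ha1 : a = 1 := by rwa [abs_of_nonneg ha] at hnorm
    rw [hwa, ha1, one_smul]
end
end
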